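/- arXiv:0902.2195 — 8 statements merged into one kernel-verified Lean document; each statement's English description precedes it below -/
import Mathlib

section
/- Suppose A, B ∈ SL₂(ℂ) satisfy tr A = tr B. Set y = tr(A²), r = tr(A⁻¹B), and for an integer k with m = ⌊k/2⌋ define W_k = (AB⁻¹)^m (A⁻¹B)^m if k is even and W_k = (AB⁻¹)^m AB (A⁻¹B)^m if k is odd. Then tr(W_k) = Φ_{-k}(r)·Ψ_k(r)·(y - r) + 2. -/
open Polynomial Matrix

/-!
By Cayley–Hamilton every `M ∈ SL₂` satisfies `M² = (tr M) M - 1`, hence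
`M ^ n = S_{n-1}(tr M) M - S_{n-2}(tr M)` for all `n : ℤ`, where `S` are the normalized Chebyshev
polynomials of the second kind; the recurrence for `f` says exactly `f j = S_{j-1}`.
Since `AB⁻¹` and `A⁻¹B` both have trace `r`, `tr W_k` is a quadratic form in `S_{m-1}(r)` and
`S_{m-2}(r)` whose coefficients are traces of short words in `A` and `B`. Cayley–Hamilton reduces
these to polynomials in `tr A = tr B` and `tr AB`, and the Cassini-type identity
`S_n² + S_{n+1}² - r S_n S_{n+1} = 1` collapses the form to `Φ_{-k}(r) Ψ_k(r) (y - r) + 2`.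
-/

noncomputable def trc (M : Matrix.SpecialLinearGroup (Fin 2) ℂ) : ℂ :=
  Matrix.trace (M : Matrix (Fin 2) (Fin 2) ℂ)

section Chebyshev

open Chebyshev

theorem eq_S_sub_one_of_recurrence {f : ℤ → ℤ[X]} (hf0 : f 0 = 0) (hf1 : f 1 = 1)
    (hrec : ∀ j, f (j + 1) = X * f j - f (j - 1)) (j : ℤ) : f j = S ℤ (j - 1) := by
  induction j using Chebyshev.induct with
  | zero => simp [hf0]
  | one => simp [hf1]
  | add_two n h1 h0 =>
    rw [show (n : ℤ) + 2 = n + 1 + 1 by ring, hrec, add_sub_cancel_right, h1, h0,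
      add_sub_cancel_right, add_sub_cancel_right, S_add_one]
  | neg_add_one n h0 h1 =>
    have h := hrec (-n)
    rw [h0, h1, show -(n : ℤ) + 1 - 1 = -n by ring] at h
    rw [show -(n : ℤ) - 1 - 1 = -n - 1 - 1 by ring, S_sub_one, sub_add_cancel]
    linear_combination h

theorem eval_S_sq_add_sq {R : Type*} [CommRing R] (t : R) (n : ℤ) :
    (S R n).eval t ^ 2 + (S R (n + 1)).eval t ^ 2 - t * (S R n).eval t * (S R (n + 1)).eval t
      = 1 := by
  simpa using congrArg (eval t) (S_sq_add_S_sq R n)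

variable {Φ : ℤ → ℤ[X]}

theorem Phi_neg_mul_Psi_two_mul (hΦeven : ∀ j, Φ (2 * j) = S ℤ (j - 1))
    (hΦodd : ∀ j, Φ (2 * j - 1) = S ℤ (j - 1) - S ℤ (j - 2)) (m : ℤ) :
    Φ (-(2 * m)) * (Φ (2 * m + 1) - Φ (2 * m - 1)) = S ℤ (m - 1) ^ 2 * (2 - X) := by
  rw [show -(2 * m) = 2 * -m by ring, show 2 * m + 1 = 2 * (m + 1) - 1 by ring, hΦeven, hΦodd,
    hΦodd, add_sub_cancel_right, S_neg_sub_one, show m + 1 - 2 = m - 1 by ring, S_eq ℤ m]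
  ring

theorem Phi_neg_mul_Psi_two_mul_add_one (hΦeven : ∀ j, Φ (2 * j) = S ℤ (j - 1))
    (hΦodd : ∀ j, Φ (2 * j - 1) = S ℤ (j - 1) - S ℤ (j - 2)) (m : ℤ) :
    Φ (-(2 * m + 1)) * (Φ (2 * m + 1 + 1) - Φ (2 * m + 1 - 1)) = (S ℤ m - S ℤ (m - 1)) ^ 2 := by
  rw [show -(2 * m + 1) = 2 * -m - 1 by ring, show 2 * m + 1 + 1 = 2 * (m + 1) by ring,
    add_sub_cancel_right, hΦeven, hΦeven, hΦodd, S_neg_sub_one, S_neg_sub_two, add_sub_cancel_right]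
  ring

end Chebyshev

namespace Matrix.SpecialLinearGroup

open Chebyshev

variable {R : Type*} [CommRing R]

local notation:1024 "↑ₘ" A:1024 => ((A : SpecialLinearGroup (Fin 2) R) : Matrix (Fin 2) (Fin 2) R)

theorem coe_inv_eq_trace_smul_one_sub (A : SpecialLinearGroup (Fin 2) R) :
    ↑ₘA⁻¹ = trace ↑ₘA • 1 - ↑ₘA := by
  rw [coe_inv, adjugate_fin_two]
  ext i j
  fin_cases i <;> fin_cases j <;> simp [trace_fin_two]

theorem coe_mul_self_eq_trace_smul_sub_one (A : SpecialLinearGroup (Fin 2) R) :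
    ↑ₘA * ↑ₘA = trace ↑ₘA • ↑ₘA - 1 := by
  have h : ↑ₘA * ↑ₘA⁻¹ = 1 := by rw [← coe_mul, mul_inv_cancel, coe_one]
  rw [coe_inv_eq_trace_smul_one_sub, mul_sub, mul_smul_comm, mul_one] at h
  rw [← h]; abel

theorem coe_zpow_eq_S (A : SpecialLinearGroup (Fin 2) R) (n : ℤ) :
    ↑ₘ(A ^ n) = (S R (n - 1)).eval (trace ↑ₘA) • ↑ₘA - (S R (n - 2)).eval (trace ↑ₘA) • 1 := by
  induction n using Int.induction_on with
  | zero => simp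
  | succ n ih =>
    rw [_root_.zpow_add_one, coe_mul, ih, add_sub_cancel_right,
      show (n : ℤ) + 1 - 2 = n - 1 by ring, S_eq R n, sub_mul, smul_mul_assoc, smul_mul_assoc,
      one_mul, coe_mul_self_eq_trace_smul_sub_one]
    simp only [eval_sub, eval_mul, eval_X]
    module
  | pred n ih =>
    rw [_root_.zpow_sub_one, coe_mul, ih, coe_inv_eq_trace_smul_one_sub,
      show -(n : ℤ) - 1 - 1 = -n - 2 by ring, show -(n : ℤ) - 1 - 2 = -n - 2 - 1 by ring,
      S_sub_one R (-n - 2), show -(n : ℤ) - 2 + 1 = -n - 1 by ring]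
    simp only [eval_sub, eval_mul, eval_X, mul_sub, sub_mul, smul_mul_assoc, mul_smul_comm, one_mul,
      mul_one, coe_mul_self_eq_trace_smul_sub_one]
    module

theorem trace_zpow_mul_mul_zpow (D P C : SpecialLinearGroup (Fin 2) R)
    (hDC : trace ↑ₘD = trace ↑ₘC) (m : ℤ) :
    trace ↑ₘ(D ^ m * P * C ^ m) =
      (S R (m - 1)).eval (trace ↑ₘD) ^ 2 * trace ↑ₘ(D * P * C)
        - (S R (m - 1)).eval (trace ↑ₘD) * (S R (m - 2)).eval (trace ↑ₘD)
          * (trace ↑ₘ(D * P) + trace ↑ₘ(P * C))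
        + (S R (m - 2)).eval (trace ↑ₘD) ^ 2 * trace ↑ₘP := by
  simp only [coe_mul, coe_zpow_eq_S, ← hDC, sub_mul, mul_sub, smul_mul_assoc, mul_smul_comm,
    one_mul, mul_one, trace_sub, trace_smul, smul_eq_mul]
  ring

variable (A B : SpecialLinearGroup (Fin 2) R)

theorem mul_mul_self_eq (N : Matrix (Fin 2) (Fin 2) R) :
    N * ↑ₘA * ↑ₘA = trace ↑ₘA • (N * ↑ₘA) - N := by
  rw [mul_assoc, coe_mul_self_eq_trace_smul_sub_one, mul_sub, mul_smul_comm, mul_one]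

theorem trace_sq : trace ↑ₘ(A ^ 2) = trace ↑ₘA ^ 2 - 2 := by
  rw [sq, coe_mul, coe_mul_self_eq_trace_smul_sub_one, trace_sub, trace_smul, trace_one,
    smul_eq_mul, Fintype.card_fin]
  ring

theorem trace_mul_coe_mul :
    trace (↑ₘA * ↑ₘ(A * B)) = trace ↑ₘA * trace ↑ₘ(A * B) - trace ↑ₘB := by
  rw [coe_mul, ← mul_assoc, coe_mul_self_eq_trace_smul_sub_one, sub_mul, smul_mul_assoc, one_mul,
    trace_sub, trace_smul, smul_eq_mul]

theorem trace_coe_mul_mul :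
    trace (↑ₘ(A * B) * ↑ₘB) = trace ↑ₘB * trace ↑ₘ(A * B) - trace ↑ₘA := by
  rw [coe_mul, mul_assoc, coe_mul_self_eq_trace_smul_sub_one, mul_sub, mul_smul_comm, mul_one,
    trace_sub, trace_smul, smul_eq_mul]

theorem trace_mul_coe_mul_mul :
    trace (↑ₘA * ↑ₘ(A * B) * ↑ₘB) = trace ↑ₘA * trace ↑ₘB * trace ↑ₘ(A * B)
      - trace ↑ₘA ^ 2 - trace ↑ₘB ^ 2 + 2 := by
  rw [coe_mul, ← mul_assoc, mul_assoc, coe_mul_self_eq_trace_smul_sub_one,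
    coe_mul_self_eq_trace_smul_sub_one]
  simp only [sub_mul, mul_sub, smul_mul_assoc, mul_smul_comm, one_mul, mul_one, trace_sub,
    trace_smul, smul_eq_mul, trace_one, Fintype.card_fin]
  ring

theorem coe_mul_inv_eq : ↑ₘ(A * B⁻¹) = trace ↑ₘB • ↑ₘA - ↑ₘ(A * B) := by
  rw [coe_mul, coe_mul, coe_inv_eq_trace_smul_one_sub, mul_sub, mul_smul_comm, mul_one]

theorem coe_inv_mul_eq : ↑ₘ(A⁻¹ * B) = trace ↑ₘA • ↑ₘB - ↑ₘ(A * B) := by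
  rw [coe_mul, coe_mul, coe_inv_eq_trace_smul_one_sub, sub_mul, smul_mul_assoc, one_mul]

theorem trace_mul_inv : trace ↑ₘ(A * B⁻¹) = trace ↑ₘA * trace ↑ₘB - trace ↑ₘ(A * B) := by
  rw [coe_mul_inv_eq, trace_sub, trace_smul, smul_eq_mul, mul_comm]

theorem trace_inv_mul : trace ↑ₘ(A⁻¹ * B) = trace ↑ₘA * trace ↑ₘB - trace ↑ₘ(A * B) := by
  rw [coe_inv_mul_eq, trace_sub, trace_smul, smul_eq_mul]

theorem trace_mul_inv_mul_inv_mul :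
    trace ↑ₘ(A * B⁻¹ * (A⁻¹ * B)) = trace ↑ₘA ^ 2 + trace ↑ₘB ^ 2 + trace ↑ₘ(A * B) ^ 2
      - trace ↑ₘA * trace ↑ₘB * trace ↑ₘ(A * B) - 2 := by
  rw [coe_mul, coe_mul_inv_eq, coe_inv_mul_eq]
  simp only [sub_mul, mul_sub, smul_mul_assoc, mul_smul_comm, ← mul_assoc,
    coe_mul_self_eq_trace_smul_sub_one (A * B), trace_sub, trace_smul, smul_eq_mul, trace_one,
    Fintype.card_fin, ← coe_mul A B, trace_mul_coe_mul, trace_coe_mul_mul]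
  ring

theorem trace_mul_inv_mul_mul :
    trace ↑ₘ(A * B⁻¹ * (A * B)) = trace ↑ₘA * trace ↑ₘB * trace ↑ₘ(A * B)
      - trace ↑ₘB ^ 2 - trace ↑ₘ(A * B) ^ 2 + 2 := by
  rw [coe_mul, coe_mul_inv_eq]
  simp only [sub_mul, smul_mul_assoc, coe_mul_self_eq_trace_smul_sub_one (A * B), trace_sub,
    trace_smul, smul_eq_mul, trace_one, Fintype.card_fin, trace_mul_coe_mul]
  ring

theorem trace_mul_mul_inv_mul :
    trace ↑ₘ(A * B * (A⁻¹ * B)) = trace ↑ₘA * trace ↑ₘB * trace ↑ₘ(A * B)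
      - trace ↑ₘA ^ 2 - trace ↑ₘ(A * B) ^ 2 + 2 := by
  rw [coe_mul (A * B), coe_inv_mul_eq]
  simp only [mul_sub, mul_smul_comm, coe_mul_self_eq_trace_smul_sub_one (A * B), trace_sub,
    trace_smul, smul_eq_mul, trace_one, Fintype.card_fin, trace_coe_mul_mul]
  ring

theorem trace_mul_inv_mul_mul_mul_inv_mul :
    trace ↑ₘ(A * B⁻¹ * (A * B) * (A⁻¹ * B)) =
      trace ↑ₘA ^ 2 * trace ↑ₘB ^ 2 * trace ↑ₘ(A * B)
        - (trace ↑ₘA ^ 2 + trace ↑ₘB ^ 2) * trace ↑ₘA * trace ↑ₘB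
        - 2 * trace ↑ₘA * trace ↑ₘB * trace ↑ₘ(A * B) ^ 2 + 4 * trace ↑ₘA * trace ↑ₘB
        + (trace ↑ₘA ^ 2 + trace ↑ₘB ^ 2) * trace ↑ₘ(A * B) + trace ↑ₘ(A * B) ^ 3
        - 3 * trace ↑ₘ(A * B) := by
  rw [coe_mul, coe_mul, coe_mul_inv_eq, coe_inv_mul_eq]
  simp only [sub_mul, mul_sub, smul_mul_assoc, mul_smul_comm, ← mul_assoc,
    mul_mul_self_eq (A * B), coe_mul_self_eq_trace_smul_sub_one (A * B), trace_sub, trace_smul,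
    smul_eq_mul, trace_one, Fintype.card_fin, one_mul, trace_mul_coe_mul, trace_coe_mul_mul,
    trace_mul_coe_mul_mul]
  ring

variable (m : ℤ)

theorem trace_zpow_mul_inv_mul_zpow_inv_mul (hAB : trace ↑ₘA = trace ↑ₘB) :
    trace ↑ₘ((A * B⁻¹) ^ m * (A⁻¹ * B) ^ m) =
      (S R (m - 1)).eval (trace ↑ₘ(A⁻¹ * B)) ^ 2 * (2 - trace ↑ₘ(A⁻¹ * B))
        * (trace ↑ₘ(A ^ 2) - trace ↑ₘ(A⁻¹ * B)) + 2 := by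
  have hDC : trace ↑ₘ(A * B⁻¹) = trace ↑ₘ(A⁻¹ * B) := by rw [trace_mul_inv, trace_inv_mul]
  have h := eval_S_sq_add_sq (trace ↑ₘ(A⁻¹ * B)) (m - 2)
  rw [show m - 2 + 1 = m - 1 by ring] at h
  rw [← mul_one ((A * B⁻¹) ^ m), trace_zpow_mul_mul_zpow _ _ _ hDC, mul_one, one_mul, hDC,
    trace_mul_inv_mul_inv_mul, coe_one, trace_one, Fintype.card_fin, trace_sq]
  rw [trace_inv_mul, ← hAB] at h ⊢
  linear_combination 2 * h

theorem trace_zpow_mul_inv_mul_mul_mul_zpow_inv_mul (hAB : trace ↑ₘA = trace ↑ₘB) :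
    trace ↑ₘ((A * B⁻¹) ^ m * (A * B) * (A⁻¹ * B) ^ m) =
      ((S R m).eval (trace ↑ₘ(A⁻¹ * B)) - (S R (m - 1)).eval (trace ↑ₘ(A⁻¹ * B))) ^ 2
        * (trace ↑ₘ(A ^ 2) - trace ↑ₘ(A⁻¹ * B)) + 2 := by
  have hDC : trace ↑ₘ(A * B⁻¹) = trace ↑ₘ(A⁻¹ * B) := by rw [trace_mul_inv, trace_inv_mul]
  have h := eval_S_sq_add_sq (trace ↑ₘ(A⁻¹ * B)) (m - 2)
  rw [show m - 2 + 1 = m - 1 by ring] at h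
  rw [trace_zpow_mul_mul_zpow _ _ _ hDC, hDC, S_eq R m, trace_mul_inv_mul_mul_mul_inv_mul,
    trace_mul_inv_mul_mul, trace_mul_mul_inv_mul, trace_sq]
  simp only [eval_sub, eval_mul, eval_X]
  rw [trace_inv_mul, ← hAB] at h ⊢
  linear_combination 2 * h

end Matrix.SpecialLinearGroup

/-- for `A, B ∈ SL₂(ℂ)` with `tr A = tr B`, setting `y = tr A²`,
`r = tr(A⁻¹B)`, `m = ⌊k/2⌋`, and `W k = (AB⁻¹)^m (A⁻¹B)^m` (`k` even) or
`(AB⁻¹)^m AB (A⁻¹B)^m` (`k` odd), one has `tr (W k) = Φ (-k) (r) · Ψ k (r) · (y - r) + 2`,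
where `Φ (2j) = f j`, `Φ (2j-1) = g j = f j - f (j-1)`, `Ψ k = Φ (k+1) - Φ (k-1)`. -/
theorem stmt7 (f Φ : ℤ → Polynomial ℤ)
    (hf0 : f 0 = 0) (hf1 : f 1 = 1)
    (hrec : ∀ j : ℤ, f (j + 1) = X * f j - f (j - 1))
    (hΦeven : ∀ j : ℤ, Φ (2 * j) = f j)
    (hΦodd : ∀ j : ℤ, Φ (2 * j - 1) = f j - f (j - 1))
    (A B : Matrix.SpecialLinearGroup (Fin 2) ℂ) (htr : trc A = trc B)
    (k m : ℤ) (y r : ℂ)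
    (hy : y = trc (A ^ 2)) (hr : r = trc (A⁻¹ * B)) :
    (k = 2 * m →
      trc ((A * B⁻¹) ^ m * (A⁻¹ * B) ^ m)
        = (Φ (-k)).eval₂ (Int.castRingHom ℂ) r
            * (Φ (k + 1) - Φ (k - 1)).eval₂ (Int.castRingHom ℂ) r * (y - r) + 2) ∧
    (k = 2 * m + 1 →
      trc ((A * B⁻¹) ^ m * (A * B) * (A⁻¹ * B) ^ m)
        = (Φ (-k)).eval₂ (Int.castRingHom ℂ) r
            * (Φ (k + 1) - Φ (k - 1)).eval₂ (Int.castRingHom ℂ) r * (y - r) + 2) := by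
  have hf := eq_S_sub_one_of_recurrence hf0 hf1 hrec
  have hΦeven' (j : ℤ) : Φ (2 * j) = Chebyshev.S ℤ (j - 1) := by rw [hΦeven, hf]
  have hΦodd' (j : ℤ) : Φ (2 * j - 1) = Chebyshev.S ℤ (j - 1) - Chebyshev.S ℤ (j - 2) := by
    rw [hΦodd, hf, hf, sub_sub, one_add_one_eq_two]
  subst hy hr
  constructor
  · rintro rfl
    rw [← eval₂_mul, Phi_neg_mul_Psi_two_mul hΦeven' hΦodd']
    simp only [← eval_map, Polynomial.map_mul, Polynomial.map_pow, Polynomial.map_sub,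
      Chebyshev.map_S, Polynomial.map_ofNat, map_X, eval_mul, eval_pow, eval_sub, eval_ofNat,
      eval_X]
    exact Matrix.SpecialLinearGroup.trace_zpow_mul_inv_mul_zpow_inv_mul A B m htr
  · rintro rfl
    rw [← eval₂_mul, Phi_neg_mul_Psi_two_mul_add_one hΦeven' hΦodd']
    simp only [← eval_map, Polynomial.map_pow, Polynomial.map_sub, Chebyshev.map_S, eval_pow,
      eval_sub]
    exact Matrix.SpecialLinearGroup.trace_zpow_mul_inv_mul_mul_mul_zpow_inv_mul A B m htr
end

section
/- For every nonzero integer n, the polynomial f_n ∈ ℤ[u] is separable (has no repeated roots over an algebraic closure of ℚ). -/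
/-!
The sequence is `f j = S (j - 1)`, where `S` are the rescaled Chebyshev polynomials of the second
kind. For the rescaled first-kind polynomial `C n = 2 S n - X S (n - 1)`, the Cassini identity
for `S` gives `C n ^ 2 - (X ^ 2 - 4) S (n - 1) ^ 2 = 4`, so `S (n - 1)` is coprime to `C n`, and
`(X ^ 2 - 4) S' (n - 1) = n C n - X S (n - 1)`. When `2` and `n` are invertible, `S (n - 1)` is
therefore coprime to `(X ^ 2 - 4) S' (n - 1)`, hence to its derivative.
-/

open Polynomial

namespace Polynomial.Chebyshev

variable {R : Type*} [CommRing R]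

theorem eq_S_sub_one_of_recurrence {f : ℤ → R[X]} (hf0 : f 0 = 0) (hf1 : f 1 = 1)
    (hrec : ∀ j : ℤ, f (j + 1) = X * f j - f (j - 1)) (j : ℤ) : f j = S R (j - 1) := by
  suffices h : ∀ m : ℤ, f (m + 1) = S R m by simpa using h (j - 1)
  intro m
  induction m using Polynomial.Chebyshev.induct with
  | zero => simp [hf1]
  | one => rw [hrec, sub_self, hf1, hf0, S_one, mul_one, sub_zero]
  | add_two n ih1 ih2 =>
    rw [S_add_two, ← ih1, ← ih2, hrec]
    ring_nf
  | neg_add_one n ih1 ih2 =>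
    rw [S_sub_one, ← ih1, ← ih2, sub_add_cancel, hrec (-n + 1), add_sub_cancel_right]
    ring

variable (R)

theorem C_sq_eq_X_sq_sub_four_mul_S_sq (n : ℤ) :
    C R n ^ 2 = (X ^ 2 - 4) * S R (n - 1) ^ 2 + 4 := by
  have h := S_sq_add_S_sq R (n - 1)
  rw [sub_add_cancel] at h
  rw [C_eq_S_sub_X_mul_S]
  linear_combination 4 * h

theorem X_sq_sub_four_mul_derivative_S (n : ℤ) :
    (X ^ 2 - 4) * derivative (S R n) = (n + 1 : R[X]) * C R (n + 1) - X * S R n := by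
  induction n using Polynomial.Chebyshev.induct with
  | zero => simp [C_one]
  | one => simp [C_two]; ring
  | add_two n ih1 ih2 =>
    have h₁ := S_add_two R n
    have h₂ := C_add_two R (n + 1)
    have h₃ := C_eq_S_sub_X_mul_S R (n + 1)
    have h₄ := C_eq_S_sub_X_mul_S R (n + 2)
    rw [S_add_two, derivative_sub, derivative_mul, derivative_X, one_mul]
    push_cast at *
    linear_combination (norm := ring_nf)
      X * ih1 - ih2 - ((n : R[X]) + 3) * h₂ - X * h₄ + 2 * h₃ - 2 * X * h₁
  | neg_add_one n ih1 ih2 =>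
    have h₁ := S_sub_one R (-n)
    have h₂ := C_add_two R (-n)
    have h₃ := C_eq_S_sub_X_mul_S R (-n + 1)
    have h₄ := C_eq_S_sub_X_mul_S R (-n)
    rw [S_sub_one, derivative_sub, derivative_mul, derivative_X, one_mul]
    push_cast at *
    linear_combination (norm := ring_nf)
      X * ih1 - ih2 - (2 - (n : R[X])) * h₂ - X * h₃ + 2 * h₄ - 2 * X * h₁

variable {R}

theorem isCoprime_S_sub_one_C (h2 : IsUnit (2 : R)) (n : ℤ) :
    IsCoprime (S R (n - 1)) (C R n) := by
  have h4 : IsUnit (4 : R[X]) := by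
    rw [← two_add_two_eq_four, ← two_mul, ← map_ofNat Polynomial.C 2, ← map_mul]
    exact isUnit_C.mpr (h2.mul h2)
  have h : IsCoprime (S R (n - 1)) (4 * 1) :=
    (isCoprime_mul_unit_left_right h4 _ _).mpr isCoprime_one_right
  rw [mul_one, show (4 : R[X]) = C R n ^ 2 + (-(X ^ 2 - 4) * S R (n - 1)) * S R (n - 1) by
    linear_combination -C_sq_eq_X_sq_sub_four_mul_S_sq R n] at h
  exact (IsCoprime.pow_right_iff two_pos).mp h.of_add_mul_right_right

theorem separable_S_sub_one (h2 : IsUnit (2 : R)) {n : ℤ} (hn : IsUnit (n : R)) :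
    (S R (n - 1)).Separable := by
  have hnC : IsUnit (n : R[X]) := by
    rw [← Polynomial.C_eq_intCast]
    exact isUnit_C.mpr hn
  have hderiv := X_sq_sub_four_mul_derivative_S R (n - 1)
  rw [Int.cast_sub, Int.cast_one, sub_add_cancel, sub_add_cancel] at hderiv
  have h : IsCoprime (S R (n - 1)) ((X ^ 2 - 4) * derivative (S R (n - 1))) := by
    rw [hderiv, sub_eq_add_neg (_ * _), ← neg_mul]
    exact ((isCoprime_mul_unit_left_right hnC _ _).mpr
      (isCoprime_S_sub_one_C h2 n)).add_mul_right_right _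
  exact h.of_mul_right_right

end Polynomial.Chebyshev

/-- for every nonzero integer `n`, the polynomial `f n` is separable
(over ℚ, equivalently it has no repeated roots in an algebraic closure of ℚ). -/
theorem stmt9 (f : ℤ → Polynomial ℤ)
    (hf0 : f 0 = 0) (hf1 : f 1 = 1)
    (hrec : ∀ j : ℤ, f (j + 1) = X * f j - f (j - 1)) (n : ℤ) (hn : n ≠ 0) :
    ((f n).map (Int.castRingHom ℚ)).Separable := by
  rw [Chebyshev.eq_S_sub_one_of_recurrence hf0 hf1 hrec, Chebyshev.map_S]
  exact Chebyshev.separable_S_sub_one (two_ne_zero.isUnit) (Int.cast_ne_zero.mpr hn).isUnit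
end

section
/- For every integer n, the identity (u + 2)·G_n = f_{2n} + 2n holds in ℤ[u], where G_n = g_{n+1}'·g_n - g_{n+1}·g_n'. -/
/-!
Since `g` satisfies the same recurrence as `f`, the Wronskian `G n` of `g n, g (n + 1)` changes by
`G n - G (n - 1) = g n ^ 2`. The addition formula `f (m + k) = f (m + 1) f k - f m f (k - 1)`
together with the Cassini identity `f m ^ 2 + f (m + 1) ^ 2 - u f m f (m + 1) = 1` gives
`(u + 2) g (m + 1) ^ 2 = f (2m + 2) - f (2m) + 2`, so both sides of the identity have the same
increments in `n`, and they agree at `n = 0`.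
-/

open Polynomial

theorem eq_of_apply_zero_of_sub_eq {M : Type*} [AddCommGroup M] {u v : ℤ → M} (h0 : u 0 = v 0)
    (h : ∀ n, u (n + 1) - u n = v (n + 1) - v n) : u = v := by
  funext n
  induction n using Int.induction_on with
  | zero => exact h0
  | succ k ih => rw [← sub_add_cancel (u (k + 1)) (u k), h, ih, sub_add_cancel]
  | pred k ih =>
    have hk := h (-k - 1)
    rw [sub_add_cancel, ih] at hk
    exact sub_right_injective hk

def ChebyshevRec {R : Type*} [CommRing R] (a : R) (f : ℤ → R) : Prop :=
  ∀ j, f (j + 1) = a * f j - f (j - 1)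

namespace ChebyshevRec

variable {R : Type*} [CommRing R] {a : R} {f g : ℤ → R}

theorem sub_one (hf : ChebyshevRec a f) (j : ℤ) : f (j - 1) = a * f j - f (j + 1) := by
  linear_combination hf j

theorem ext (hf : ChebyshevRec a f) (hg : ChebyshevRec a g) (h0 : f 0 = g 0) (h1 : f 1 = g 1) :
    f = g := by
  have key : ∀ n : ℤ, f n = g n ∧ f (n + 1) = g (n + 1) := by
    intro n
    induction n using Int.induction_on with
    | zero => exact ⟨h0, by simpa using h1⟩
    | succ k ih => exact ⟨ih.2, by rw [hf, hg, add_sub_cancel_right, ih.1, ih.2]⟩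
    | pred k ih =>
      exact ⟨by rw [hf.sub_one, hg.sub_one, ih.1, ih.2], by rw [sub_add_cancel, ih.1]⟩
  exact funext fun n => (key n).1

theorem comp_add (hf : ChebyshevRec a f) (k : ℤ) : ChebyshevRec a (fun j => f (j + k)) :=
  fun j => by convert hf (j + k) using 2 <;> ring_nf

theorem comp_neg (hf : ChebyshevRec a f) : ChebyshevRec a (fun j => f (-j)) :=
  fun j => by convert hf.sub_one (-j) using 2 <;> ring_nf

theorem neg (hf : ChebyshevRec a f) : ChebyshevRec a (fun j => -f j) :=
  fun j => by simp only [hf j]; ring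

theorem sub (hf : ChebyshevRec a f) (hg : ChebyshevRec a g) : ChebyshevRec a (fun j => f j - g j) :=
  fun j => by simp only [hf j, hg j]; ring

theorem mul_const (hf : ChebyshevRec a f) (c : R) : ChebyshevRec a (fun j => f j * c) :=
  fun j => by simp only [hf j]; ring

theorem apply_neg_one (hf : ChebyshevRec a f) (hf0 : f 0 = 0) (hf1 : f 1 = 1) : f (-1) = -1 := by
  have h := hf 0
  norm_num [hf0, hf1] at h
  linear_combination h

theorem apply_neg (hf : ChebyshevRec a f) (hf0 : f 0 = 0) (hf1 : f 1 = 1) (j : ℤ) :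
    f (-j) = -f j := by
  suffices h : (fun j => f (-j)) = fun j => -f j from congrFun h j
  exact hf.comp_neg.ext hf.neg (by simp [hf0]) (by simp [hf.apply_neg_one hf0 hf1, hf1])

theorem apply_add (hf : ChebyshevRec a f) (hf0 : f 0 = 0) (hf1 : f 1 = 1) (m k : ℤ) :
    f (m + k) = f (m + 1) * f k - f m * f (k - 1) := by
  suffices h : (fun m => f (m + k)) = fun m => f (m + 1) * f k - f m * f (k - 1) from
    congrFun h m
  refine (hf.comp_add k).ext (((hf.comp_add 1).mul_const _).sub (hf.mul_const _)) ?_ ?_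
  · simp [hf0, hf1]
  · have h2 := hf 1
    norm_num [hf0, hf1] at h2 ⊢
    rw [h2, add_comm, hf]

theorem sq_add_sq_sub_mul (hf : ChebyshevRec a f) (hf0 : f 0 = 0) (hf1 : f 1 = 1) (m : ℤ) :
    f m ^ 2 + f (m + 1) ^ 2 - a * f m * f (m + 1) = 1 := by
  have h := hf.apply_add hf0 hf1 (m + 1) (-m)
  rw [show m + 1 + -m = 1 by ring, show m + 1 + 1 = m + 2 by ring, hf1, hf.apply_neg hf0 hf1,
    show -m - 1 = -(m + 1) by ring, hf.apply_neg hf0 hf1] at h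
  have h2 := hf (m + 1)
  rw [show m + 1 + 1 = m + 2 by ring, add_sub_cancel_right] at h2
  linear_combination -h + f m * h2

theorem add_two_mul_sq (hf : ChebyshevRec a f) (hf0 : f 0 = 0) (hf1 : f 1 = 1) (m : ℤ) :
    (a + 2) * (f (m + 1) - f m) ^ 2 = f (2 * m + 2) - f (2 * m) + 2 := by
  have h := hf.apply_add hf0 hf1 (m + 1) (m + 1)
  have h' := hf.apply_add hf0 hf1 m m
  rw [show m + 1 + (m + 1) = 2 * m + 2 by ring, add_sub_cancel_right, hf (m + 1),
    add_sub_cancel_right] at h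
  rw [← two_mul, hf.sub_one m] at h'
  linear_combination -h + h' + 2 * hf.sq_add_sq_sub_mul hf0 hf1 m

theorem wronskian_succ {p : ℤ → R[X]} (hp : ChebyshevRec X p) (n : ℤ) :
    wronskian (p (n + 1)) (p (n + 1 + 1)) = wronskian (p n) (p (n + 1)) + p (n + 1) ^ 2 := by
  rw [hp (n + 1), add_sub_cancel_right]
  simp only [wronskian, derivative_sub, derivative_mul, derivative_X]
  ring

end ChebyshevRec

/-- `(u + 2) · G n = f (2n) + 2n` in `ℤ[u]`, where
`G n = g (n+1)' · g n - g (n+1) · g n'`. -/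
theorem stmt11 (f : ℤ → Polynomial ℤ)
    (hf0 : f 0 = 0) (hf1 : f 1 = 1)
    (hrec : ∀ j : ℤ, f (j + 1) = X * f j - f (j - 1))
    (g : ℤ → Polynomial ℤ) (hg : ∀ j : ℤ, g j = f j - f (j - 1)) (n : ℤ) :
    (X + 2) * (derivative (g (n + 1)) * g n - g (n + 1) * derivative (g n))
      = f (2 * n) + C (2 * n) := by
  have hf : ChebyshevRec X f := hrec
  have hg' : ChebyshevRec X g := by
    convert hf.sub (hf.comp_add (-1)) using 1
    funext j
    rw [hg, ← sub_eq_add_neg]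
  have key : (fun n => (X + 2) * wronskian (g n) (g (n + 1))) = fun n => f (2 * n) + C (2 * n) := by
    refine eq_of_apply_zero_of_sub_eq ?_ fun n => ?_
    · simp [hg, hf0, hf1, hf.apply_neg_one hf0 hf1, wronskian_self_eq_zero]
    · calc (X + 2) * wronskian (g (n + 1)) (g (n + 1 + 1)) - (X + 2) * wronskian (g n) (g (n + 1))
          = (X + 2) * (f (n + 1) - f n) ^ 2 := by
            rw [hg'.wronskian_succ, mul_add, add_sub_cancel_left, hg, add_sub_cancel_right]
        _ = f (2 * n + 2) - f (2 * n) + 2 := hf.add_two_mul_sq hf0 hf1 n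
        _ = f (2 * (n + 1)) + C (2 * (n + 1)) - (f (2 * n) + C (2 * n)) := by
            rw [mul_add, mul_one, map_add, C_ofNat]; ring
  have h := congrFun key n
  simp only [wronskian] at h
  rw [← h]
  ring
end

section
/- For every integer n, G_n(2) = n and G_n(-2) = n(4n² - 1)/3, where G_n = g_{n+1}'·g_n - g_{n+1}·g_n'. -/
/-!
Both `f` and `g` solve the two-sided recurrence `a (j+1) = u a j - a (j-1)`, and for any
polynomial solution the expression `G n` increases by `g n ^ 2` from `n - 1` to `n`. As
`g 0 = g 1 = 1`, `G 0 = 0`, and the recurrence at `u = 2` and `u = -2` gives `g n (2) = 1` and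
`g n (-2) = ±(2n - 1)`; summing the squares yields `n` and `n (4n² - 1) / 3`.
-/

open Polynomial

def IsChebyshevRec {R : Type*} [Ring R] (c : R) (a : ℤ → R) : Prop :=
  ∀ j, a (j + 1) = c * a j - a (j - 1)

noncomputable def derivWronskian {R : Type*} [CommRing R] (p : ℤ → R[X]) (n : ℤ) : R[X] :=
  derivative (p (n + 1)) * p n - p (n + 1) * derivative (p n)

namespace IsChebyshevRec

variable {R : Type*}

section Ring

variable [Ring R] {c : R} {a b : ℤ → R}

theorem pred (ha : IsChebyshevRec c a) (j : ℤ) : a (j - 1) = c * a j - a (j + 1) := by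
  rw [ha j]; abel

theorem sub_pred (ha : IsChebyshevRec c a) : IsChebyshevRec c fun j ↦ a j - a (j - 1) := by
  intro j
  dsimp only
  rw [ha j, add_sub_cancel_right, ha.pred (j - 1), sub_add_cancel, mul_sub]
  abel

theorem ext (ha : IsChebyshevRec c a) (hb : IsChebyshevRec c b) (h0 : a 0 = b 0)
    (h1 : a 1 = b 1) : a = b := by
  suffices h : ∀ n, a n = b n ∧ a (n + 1) = b (n + 1) from funext fun n ↦ (h n).1
  intro n
  induction n using Int.induction_on with
  | zero => exact ⟨h0, h1⟩
  | succ k ih => exact ⟨ih.2, by rw [ha, hb, add_sub_cancel_right, ih.1, ih.2]⟩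
  | pred k ih =>
    rw [sub_add_cancel]
    exact ⟨by rw [ha.pred, hb.pred, ih.1, ih.2], ih.1⟩

end Ring

theorem eval [CommRing R] {p : ℤ → R[X]} (hp : IsChebyshevRec X p) (x : R) :
    IsChebyshevRec x fun j ↦ (p j).eval x := by
  intro j
  dsimp only
  rw [hp j, eval_sub, eval_mul, eval_X]

theorem derivWronskian_sub_pred [CommRing R] {p : ℤ → R[X]} (hp : IsChebyshevRec X p) (n : ℤ) :
    derivWronskian p n - derivWronskian p (n - 1) = p n ^ 2 := by
  rw [derivWronskian, derivWronskian, sub_add_cancel, hp n, derivative_sub, derivative_mul,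
    derivative_X]
  ring

end IsChebyshevRec

theorem Int.seq_eq_of_sub_pred_eq {M : Type*} [AddCommGroup M] {a b : ℤ → M}
    (h : ∀ n, a n - a (n - 1) = b n - b (n - 1)) (h0 : a 0 = b 0) : a = b := by
  funext n
  induction n using Int.induction_on with
  | zero => exact h0
  | succ k ih =>
    have := h (k + 1)
    rw [add_sub_cancel_right, ih] at this
    exact sub_left_injective this
  | pred k ih =>
    have := h (-k)
    rw [ih] at this
    exact sub_right_injective this

theorem isChebyshevRec_neg_two :
    IsChebyshevRec (-2 : ℤ) fun j ↦ ((j + 1).negOnePow : ℤ) * (2 * j - 1) := by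
  intro j
  dsimp only
  rw [show j - 1 + 1 = j + 1 - 1 by ring, Int.negOnePow_succ, Int.negOnePow_sub,
    Int.negOnePow_one]
  push_cast
  ring

/-- `G n (2) = n` and `G n (-2) = n (4n² - 1)/3`, where
`G n = g (n+1)' · g n - g (n+1) · g n'`. -/
theorem stmt12 (f : ℤ → Polynomial ℤ)
    (hf0 : f 0 = 0) (hf1 : f 1 = 1)
    (hrec : ∀ j : ℤ, f (j + 1) = X * f j - f (j - 1))
    (g : ℤ → Polynomial ℤ) (hg : ∀ j : ℤ, g j = f j - f (j - 1))
    (G : ℤ → Polynomial ℤ)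
    (hG : ∀ n : ℤ, G n = derivative (g (n + 1)) * g n - g (n + 1) * derivative (g n))
    (n : ℤ) :
    (G n).eval 2 = n ∧
    ((((G n).eval (-2) : ℤ) : ℚ) = (n : ℚ) * (4 * (n : ℚ) ^ 2 - 1) / 3) := by
  have hf : IsChebyshevRec X f := hrec
  have hgrec : IsChebyshevRec X g := by rw [funext hg]; exact hf.sub_pred
  obtain rfl : G = derivWronskian g := funext hG
  have hg0 : g 0 = 1 := by rw [hg, hf.pred, zero_add, hf0, hf1]; ring
  have hg1 : g 1 = 1 := by rw [hg, sub_self, hf0, hf1, sub_zero]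
  have step (x m : ℤ) :
      (derivWronskian g m).eval x - (derivWronskian g (m - 1)).eval x = (g m).eval x ^ 2 := by
    rw [← eval_sub, hgrec.derivWronskian_sub_pred, eval_pow]
  have hG0 : derivWronskian g 0 = 0 := by simp [derivWronskian, hg0, hg1]
  have at_two : (fun j ↦ (g j).eval 2) = fun _ ↦ 1 :=
    (hgrec.eval 2).ext (fun _ ↦ by norm_num) (by simp [hg0]) (by simp [hg1])
  have at_neg_two : (fun j ↦ (g j).eval (-2)) = fun j ↦ ((j + 1).negOnePow : ℤ) * (2 * j - 1) :=
    (hgrec.eval (-2)).ext isChebyshevRec_neg_two (by simp [hg0]) (by simp [hg1, Int.negOnePow_def])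
  constructor
  · refine congrFun (Int.seq_eq_of_sub_pred_eq (a := fun m ↦ (derivWronskian g m).eval 2)
      (b := fun m ↦ m) (fun m ↦ ?_) (by simp [hG0])) n
    rw [step, congrFun at_two]
    ring
  · refine congrFun (Int.seq_eq_of_sub_pred_eq
      (a := fun m ↦ (((derivWronskian g m).eval (-2) : ℤ) : ℚ))
      (b := fun m : ℤ ↦ (m : ℚ) * (4 * (m : ℚ) ^ 2 - 1) / 3) (fun m ↦ ?_) (by simp [hG0])) n
    rw [← Int.cast_sub, step, congrFun at_neg_two, mul_pow, ← Units.val_pow_eq_pow_val,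
      Int.units_sq]
    push_cast
    ring
end

section
/- Let n be an integer and F a field whose characteristic does not divide 2n - 1. Then the image of g_n in F[u] is separable, and the ideal generated by the images of G_n and g_n in F[u] is the unit ideal. -/
/-!
Modulo `g n`, the element `u - 2` is a unit because `g n` takes the value `1` at `u = 2`.
The Cassini-type identity `g (n + 1) * g (n - 1) = g n ^ 2 + (u - 2)` then makes `g (n + 1)` a
unit modulo `g n`, and the differential identity
`(u ^ 2 - 4) * g n' = (2n - 1) * g (n + 1) - (n u - 1) * g n` makes `g n'` a unit modulo `g n`
once `2n - 1` is invertible; this is separability. Finally `G n ≡ -g (n + 1) * g n'` modulo `g n`.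
-/

open Polynomial

theorem eq_zero_of_three_term_recurrence {S : Type*} [Ring S] (a : S) {e : ℤ → S}
    (hrec : ∀ j, e (j + 1) = a * e j - e (j - 1)) (h0 : e 0 = 0) (h1 : e 1 = 0) (m : ℤ) :
    e m = 0 := by
  suffices e m = 0 ∧ e (m + 1) = 0 from this.1
  induction m using Int.inductionOn' (b := 0) with
  | zero => exact ⟨h0, by simpa using h1⟩
  | succ k _ ih =>
    refine ⟨ih.2, ?_⟩
    rw [hrec, ih.2, add_sub_cancel_right, ih.1, mul_zero, sub_zero]
  | pred k _ ih =>
    refine ⟨?_, by rw [sub_add_cancel]; exact ih.1⟩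
    have hk := hrec k
    rwa [ih.1, ih.2, mul_zero, zero_sub, eq_comm, neg_eq_zero] at hk

/-- The initial values and recurrence of the paper's `g j = f j - f (j - 1)`. -/
structure IsGSequence {R : Type*} [CommRing R] (g : ℤ → R[X]) : Prop where
  zero : g 0 = 1
  one : g 1 = 1
  succ : ∀ j, g (j + 1) = X * g j - g (j - 1)

theorem isGSequence_of_sub {R : Type*} [CommRing R] {f g : ℤ → R[X]} (hf0 : f 0 = 0)
    (hf1 : f 1 = 1) (hrec : ∀ j, f (j + 1) = X * f j - f (j - 1))
    (hg : ∀ j, g j = f j - f (j - 1)) : IsGSequence g where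
  zero := by
    have h := hrec 0
    rw [zero_add, hf0, hf1] at h
    rw [hg, hf0, zero_sub]
    linear_combination -h
  one := by rw [hg, sub_self, hf0, hf1, sub_zero]
  succ j := by
    have h := hrec (j - 1)
    rw [sub_add_cancel] at h
    rw [hg, hg, hg, add_sub_cancel_right, hrec]
    linear_combination -h

namespace IsGSequence

variable {R : Type*} [CommRing R] {g : ℤ → R[X]}

theorem map {S : Type*} [CommRing S] (hg : IsGSequence g) (φ : R →+* S) :
    IsGSequence fun j ↦ (g j).map φ where
  zero := by rw [hg.zero, Polynomial.map_one]
  one := by rw [hg.one, Polynomial.map_one]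
  succ j := by rw [hg.succ, Polynomial.map_sub, Polynomial.map_mul, map_X]

theorem eval_two (hg : IsGSequence g) (m : ℤ) : (g m).eval 2 = 1 := by
  rw [← sub_eq_zero]
  refine eq_zero_of_three_term_recurrence (2 : R) (e := fun j ↦ (g j).eval 2 - 1)
    (fun j ↦ ?_) (by simp [hg.zero]) (by simp [hg.one]) m
  simp only [hg.succ j, eval_sub, eval_mul, eval_X]
  ring

theorem succ_mul_pred_sub_sq (hg : IsGSequence g) (m : ℤ) :
    g (m + 1) * g (m - 1) - g m ^ 2 = X - 2 := by
  induction m using Int.inductionOn' (b := 0) with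
  | zero =>
    have h := hg.succ 0
    rw [zero_add, hg.zero, hg.one] at h
    rw [zero_add, hg.zero, hg.one]
    linear_combination h
  | succ k _ ih =>
    rw [add_sub_cancel_right, hg.succ (k + 1), add_sub_cancel_right]
    linear_combination ih - g (k + 1) * hg.succ k
  | pred k _ ih =>
    have h := hg.succ (k - 1)
    rw [sub_add_cancel] at h
    rw [sub_add_cancel]
    linear_combination ih + g k * h - g (k - 1) * hg.succ k

theorem X_sq_sub_four_mul_derivative (hg : IsGSequence g) (m : ℤ) :
    (X ^ 2 - 4) * derivative (g m) =
      (2 * (m : R[X]) - 1) * g (m + 1) - ((m : R[X]) * X - 1) * g m := by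
  rw [← sub_eq_zero]
  refine eq_zero_of_three_term_recurrence X (fun j ↦ ?_) ?_ ?_ m
    (e := fun j : ℤ ↦ (X ^ 2 - 4) * derivative (g j) -
      ((2 * (j : R[X]) - 1) * g (j + 1) - ((j : R[X]) * X - 1) * g j))
  · have h1 := hg.succ j
    have h2 := hg.succ (j + 1)
    rw [add_sub_cancel_right] at h2
    have h3 := congrArg derivative h1
    simp only [derivative_sub, derivative_mul, derivative_X, one_mul] at h3
    push_cast
    rw [sub_add_cancel]
    linear_combination (X ^ 2 - 4) * h3 - (2 * (j : R[X]) + 1) * h2 + ((j - 1) * X - 1) * h1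
  · simp [hg.zero, hg.one]
  · have h := hg.succ 1
    rw [sub_self, hg.one, hg.zero] at h
    rw [h, hg.one]
    simp only [derivative_one, Int.cast_one]
    ring

theorem isCoprime_X_sub_two (hg : IsGSequence g) (m : ℤ) : IsCoprime (X - 2) (g m) := by
  obtain ⟨q, hq⟩ : X - C 2 ∣ g m - C ((g m).eval 2) := X_sub_C_dvd_sub_C_eval
  rw [hg.eval_two, map_one, map_ofNat] at hq
  exact ⟨-q, 1, by linear_combination hq⟩

theorem isCoprime_succ (hg : IsGSequence g) (m : ℤ) : IsCoprime (g (m + 1)) (g m) := by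
  have h : IsCoprime (X - 2 + g m * g m) (g m) := (hg.isCoprime_X_sub_two m).add_mul_left_left _
  rw [← hg.succ_mul_pred_sub_sq m, sq, sub_add_cancel] at h
  exact h.of_mul_left_left

theorem isCoprime_derivative (hg : IsGSequence g) {m : ℤ} (hm : IsUnit ((2 * m - 1 : ℤ) : R)) :
    IsCoprime (derivative (g m)) (g m) := by
  have hunit : IsUnit (2 * (m : R[X]) - 1) := by
    have h := hm.map (C : R →+* R[X])
    rw [map_intCast] at h
    exact_mod_cast h
  have h : IsCoprime ((2 * (m : R[X]) - 1) * g (m + 1) + g m * -((m : R[X]) * X - 1)) (g m) :=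
    ((isCoprime_mul_unit_left_left hunit _ _).mpr (hg.isCoprime_succ m)).add_mul_left_left _
  rw [mul_neg, ← sub_eq_add_neg, mul_comm (g m), ← hg.X_sq_sub_four_mul_derivative] at h
  exact h.of_mul_left_right

theorem separable (hg : IsGSequence g) {m : ℤ} (hm : IsUnit ((2 * m - 1 : ℤ) : R)) :
    (g m).Separable :=
  (hg.isCoprime_derivative hm).symm

theorem isCoprime_wronskian (hg : IsGSequence g) {m : ℤ} (hm : IsUnit ((2 * m - 1 : ℤ) : R)) :
    IsCoprime (derivative (g (m + 1)) * g m - g (m + 1) * derivative (g m)) (g m) := by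
  have h : IsCoprime (g (m + 1) * derivative (g m)) (g m) :=
    (hg.isCoprime_succ m).mul_left (hg.isCoprime_derivative hm)
  have h' := h.neg_left.add_mul_left_left (derivative (g (m + 1)))
  rwa [neg_add_eq_sub, mul_comm (g m)] at h'

end IsGSequence

/-- if `F` is a field whose characteristic does not divide `2n - 1`,
then the image of `g n` in `F[u]` is separable, and the images of `G n` and `g n`
generate the unit ideal of `F[u]`. -/
theorem stmt13 (f : ℤ → Polynomial ℤ)
    (hf0 : f 0 = 0) (hf1 : f 1 = 1)
    (hrec : ∀ j : ℤ, f (j + 1) = X * f j - f (j - 1))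
    (g : ℤ → Polynomial ℤ) (hg : ∀ j : ℤ, g j = f j - f (j - 1))
    (G : ℤ → Polynomial ℤ)
    (hG : ∀ n : ℤ, G n = derivative (g (n + 1)) * g n - g (n + 1) * derivative (g n))
    (n : ℤ) (F : Type*) [Field F] (hchar : ¬ ((ringChar F : ℤ) ∣ (2 * n - 1))) :
    ((g n).map (Int.castRingHom F)).Separable ∧
    Ideal.span ({(G n).map (Int.castRingHom F), (g n).map (Int.castRingHom F)} :
        Set (Polynomial F)) = ⊤ := by
  have hgF := (isGSequence_of_sub hf0 hf1 hrec hg).map (Int.castRingHom F)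
  have hunit : IsUnit ((2 * n - 1 : ℤ) : F) :=
    Ne.isUnit fun h ↦ hchar ((CharP.intCast_eq_zero_iff F (ringChar F) _).mp h)
  refine ⟨hgF.separable hunit, ?_⟩
  rw [Ideal.span_insert, Ideal.sup_eq_top_iff_isCoprime, hG, Polynomial.map_sub,
    Polynomial.map_mul, Polynomial.map_mul, ← derivative_map, ← derivative_map]
  exact hgF.isCoprime_wronskian hunit
end

section
/- Let n be a nonzero integer and ω ∈ ℂ a root of G_n. Then g_n(ω) ≠ 0, and setting h = g_{n+1}(ω)/g_n(ω): if n > 0 then |h| > 1, and if n < 0 then |h| < 1. -/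
/-!
The Wronskians `G m = W(g m, g (m + 1))` satisfy `G (m + 1) = G m + g (m + 1) ^ 2` and
`G 0 = 0`, so on the real line `G n ≥ 1` for `n > 0` and `G n ≤ -1` for `n < 0`: every root
`ω` of `G n` is non-real. Together with the invariant
`g (m + 1) ^ 2 - X g (m + 1) g m + g m ^ 2 = 2 - X` this gives
`(X ^ 2 - 4) G m = g (m + 1) ^ 2 - g m ^ 2 + 2 m (X - 2)`; if `g n (ω) = 0`, these two
identities force `ω = 2`.

Write `ω = ζ + ζ⁻¹`; then `|ζ| ≠ 1` and `(1 + ζ) g j (ω) = ζ ^ j + ζ ^ (1 - j)`. With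
`w = ζ ^ (2 n)`, `G n (ω) = 0` becomes `w - w⁻¹ = 2 n (ζ⁻¹ - ζ)`, so `Im w Im ζ` has the sign
of `-n`, whereas `(|w| ^ 2 - 1) (|ζ| ^ 2 - 1)` has the sign of `n`. Hence
`|(1 + ζ) ζ ^ n| ^ 2 (|g (n + 1) (ω)| ^ 2 - |g n (ω)| ^ 2) = |w ζ + 1| ^ 2 - |w + ζ| ^ 2`
`= (|w| ^ 2 - 1) (|ζ| ^ 2 - 1) - 4 Im w Im ζ` has the sign of `n`.
-/

open Polynomial

theorem Int.apply_eq_apply_zero_of_apply_succ {α : Type*} {u : ℤ → α}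
    (h : ∀ j, u (j + 1) = u j) (j : ℤ) : u j = u 0 := by
  induction j using Int.induction_on with
  | zero => rfl
  | succ i ih => rw [h, ih]
  | pred i ih => rw [← ih, ← h (-i - 1), sub_add_cancel]

theorem eq_of_rec_of_eq_of_eq {R : Type*} [Ring R] {u v : ℤ → R} (c : R)
    (hu : ∀ j, u (j + 1) = c * u j - u (j - 1)) (hv : ∀ j, v (j + 1) = c * v j - v (j - 1))
    (h0 : u 0 = v 0) (h1 : u 1 = v 1) : u = v := by
  suffices h : ∀ j, u j = v j ∧ u (j + 1) = v (j + 1) from funext fun j => (h j).1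
  intro j
  induction j using Int.induction_on with
  | zero => exact ⟨h0, by rwa [zero_add]⟩
  | succ i ih =>
    refine ⟨ih.2, ?_⟩
    rw [hu, hv, add_sub_cancel_right, ih.1, ih.2]
  | pred i ih =>
    refine ⟨?_, by rw [sub_add_cancel]; exact ih.1⟩
    have hu' := hu (-i)
    have hv' := hv (-i)
    rw [ih.1, ih.2] at hu'
    rw [hu'] at hv'
    simpa using hv'

theorem rec_of_eq_sub_pred {R : Type*} [CommRing R] {f g : ℤ → R} (c : R)
    (hrec : ∀ j, f (j + 1) = c * f j - f (j - 1)) (hg : ∀ j, g j = f j - f (j - 1)) (j : ℤ) :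
    g (j + 1) = c * g j - g (j - 1) := by
  have h := hrec (j - 1)
  rw [sub_add_cancel] at h
  rw [hg, hg, hg, add_sub_cancel_right, hrec]
  linear_combination -h

theorem sq_sub_mul_add_sq_of_rec {R : Type*} [CommRing R] {u : ℤ → R} (c : R)
    (hu : ∀ j, u (j + 1) = c * u j - u (j - 1)) (j : ℤ) :
    u (j + 1) ^ 2 - c * u (j + 1) * u j + u j ^ 2 = u 1 ^ 2 - c * u 1 * u 0 + u 0 ^ 2 := by
  refine Int.apply_eq_apply_zero_of_apply_succ
    (u := fun j => u (j + 1) ^ 2 - c * u (j + 1) * u j + u j ^ 2) (fun j => ?_) j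
  rw [hu (j + 1), add_sub_cancel_right]
  ring

theorem exists_ne_zero_add_inv_eq (ω : ℂ) : ∃ ζ : ℂ, ζ ≠ 0 ∧ ζ + ζ⁻¹ = ω := by
  obtain ⟨s, hs⟩ := IsAlgClosed.exists_pow_nat_eq (ω ^ 2 - 4) two_pos
  have h : (ω + s) / 2 * (ω - (ω + s) / 2) = 1 := by linear_combination -hs / 4
  refine ⟨_, left_ne_zero_of_mul_eq_one h, ?_⟩
  rw [← eq_inv_of_mul_eq_one_right h]
  ring

theorem Complex.im_add_inv (z : ℂ) : (z + z⁻¹).im = z.im * (1 - (normSq z)⁻¹) := by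
  rw [add_im, inv_im]; ring

theorem Complex.sq_norm_mul_add_one_sub_sq_norm_add (w z : ℂ) :
    ‖w * z + 1‖ ^ 2 - ‖w + z‖ ^ 2 =
      (‖w‖ ^ 2 - 1) * (‖z‖ ^ 2 - 1) - 4 * (w.im * z.im) := by
  simp only [Complex.sq_norm, normSq_apply, add_re, add_im, mul_re, mul_im, one_re, one_im]
  ring

theorem Complex.mul_im_mul_im_nonpos_of_sub_inv_eq {w z : ℂ} {ν : ℝ}
    (h : w - w⁻¹ = ν * (z⁻¹ - z)) : ν * (w.im * z.im) ≤ 0 := by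
  have him := congrArg im h
  simp only [sub_im, inv_im, im_ofReal_mul] at him
  have hw : 0 < 1 + (normSq w)⁻¹ :=
    add_pos_of_pos_of_nonneg one_pos (inv_nonneg.2 (normSq_nonneg w))
  have hz : 0 ≤ 1 + (normSq z)⁻¹ := add_nonneg zero_le_one (inv_nonneg.2 (normSq_nonneg z))
  have key :
      ν * (w.im * z.im) * (1 + (normSq w)⁻¹) = -(ν * z.im) ^ 2 * (1 + (normSq z)⁻¹) := by
    linear_combination (ν * z.im) * him
  nlinarith [sq_nonneg (ν * z.im)]

theorem Real.zpow_sub_one_mul_sub_one_pos {r : ℝ} (hr : 0 < r) (hr1 : r ≠ 1) {n : ℤ}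
    (hn : n ≠ 0) :
    0 < n * ((r ^ n - 1) * (r - 1)) := by
  rcases hr1.lt_or_gt with hr1 | hr1 <;> rcases hn.lt_or_gt with hn | hn
  · exact mul_pos_of_neg_of_neg (by exact_mod_cast hn)
      (mul_neg_of_pos_of_neg (by linarith [one_lt_zpow_of_neg₀ hr hr1 hn]) (by linarith))
  · exact mul_pos (by exact_mod_cast hn)
      (mul_pos_of_neg_of_neg (by linarith [zpow_lt_one₀ hr hr1 hn]) (by linarith))
  · exact mul_pos_of_neg_of_neg (by exact_mod_cast hn)
      (mul_neg_of_neg_of_pos (by linarith [zpow_lt_one_of_neg₀ hr1 hn]) (by linarith))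
  · exact mul_pos (by exact_mod_cast hn)
      (mul_pos (by linarith [one_lt_zpow₀ hr1 hn]) (by linarith))

theorem Complex.pos_mul_sq_norm_mul_add_one_sub_sq_norm_add {w z : ℂ} {ν : ℝ}
    (h : w - w⁻¹ = ν * (z⁻¹ - z)) (hν : 0 < ν * ((‖w‖ ^ 2 - 1) * (‖z‖ ^ 2 - 1))) :
    0 < ν * (‖w * z + 1‖ ^ 2 - ‖w + z‖ ^ 2) := by
  rw [sq_norm_mul_add_one_sub_sq_norm_add]
  nlinarith [mul_im_mul_im_nonpos_of_sub_inv_eq h]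

theorem sq_sub_inv_sq_eq_of_sq_sub_sq_eq {ζ t a b : ℂ} {ν : ℝ} (hζ : ζ ≠ 0) (ht : t ≠ 0)
    (hsq : ζ ^ 2 ≠ 1)
    (hA : a * ((1 + ζ) * t) = t ^ 2 * ζ + 1) (hB : b * ((1 + ζ) * t) = t ^ 2 + ζ)
    (hE : a ^ 2 - b ^ 2 + ν * (ζ + ζ⁻¹ - 2) = 0) :
    t ^ 2 - (t ^ 2)⁻¹ = ν * (ζ⁻¹ - ζ) := by
  have hE' : ζ * (a ^ 2 - b ^ 2) + ν * (ζ - 1) ^ 2 = 0 := by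
    linear_combination ζ * hE - ν * mul_inv_cancel₀ hζ
  have h1 : (ζ ^ 2 - 1) * (ζ * (t ^ 4 - 1) + ν * (ζ ^ 2 - 1) * t ^ 2) = 0 := by
    linear_combination ((1 + ζ) * t) ^ 2 * hE' - ζ * (a * ((1 + ζ) * t) + t ^ 2 * ζ + 1) * hA
      + ζ * (b * ((1 + ζ) * t) + t ^ 2 + ζ) * hB
  have h2 := (mul_eq_zero.1 h1).resolve_left (sub_ne_zero.2 hsq)
  rw [← sub_eq_zero]
  calc _ = (ζ * (t ^ 4 - 1) + ν * (ζ ^ 2 - 1) * t ^ 2) / (ζ * t ^ 2) := by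
        field_simp; ring
    _ = 0 := by rw [h2, zero_div]

section

variable {R : Type*} [CommRing R] {g : ℤ → R[X]}

theorem wronskian_succ_of_rec (hgrec : ∀ j, g (j + 1) = X * g j - g (j - 1)) (m : ℤ) :
    wronskian (g (m + 1)) (g (m + 1 + 1)) = wronskian (g m) (g (m + 1)) + g (m + 1) ^ 2 := by
  rw [hgrec (m + 1), add_sub_cancel_right]
  simp only [wronskian, derivative_sub, derivative_mul, derivative_X, one_mul]
  ring

theorem X_sq_sub_four_mul_wronskian (hg0 : g 0 = 1) (hg1 : g 1 = 1)
    (hgrec : ∀ j, g (j + 1) = X * g j - g (j - 1)) (m : ℤ) :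
    (X ^ 2 - 4) * wronskian (g m) (g (m + 1)) =
      g (m + 1) ^ 2 - g m ^ 2 + 2 * (m : R[X]) * (X - 2) := by
  have hQ : ∀ j, g (j + 1) ^ 2 - X * g (j + 1) * g j + g j ^ 2 = 2 - X := fun j => by
    rw [sq_sub_mul_add_sq_of_rec X hgrec, hg0, hg1]; ring
  let D : ℤ → R[X] := fun m => (X ^ 2 - 4) * wronskian (g m) (g (m + 1)) -
    (g (m + 1) ^ 2 - g m ^ 2 + 2 * (m : R[X]) * (X - 2))
  have hD : ∀ m, D (m + 1) = D m := fun m => by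
    simp only [D]
    rw [wronskian_succ_of_rec hgrec, hgrec (m + 1), add_sub_cancel_right]
    push_cast
    linear_combination -2 * hQ m
  have := Int.apply_eq_apply_zero_of_apply_succ hD m
  simp only [D, zero_add, hg0, hg1, wronskian_self_eq_zero] at this
  linear_combination this

end

section

variable {g : ℤ → ℤ[X]}

theorem monotone_aeval_wronskian (hgrec : ∀ j, g (j + 1) = X * g j - g (j - 1)) (x : ℝ) :
    Monotone fun m => aeval x (wronskian (g m) (g (m + 1))) :=
  monotone_int_of_le_succ fun m => by
    rw [wronskian_succ_of_rec hgrec, map_add, map_pow]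
    exact le_add_of_nonneg_right (sq_nonneg _)

theorem aeval_wronskian_ne_zero (hg0 : g 0 = 1) (hg1 : g 1 = 1)
    (hgrec : ∀ j, g (j + 1) = X * g j - g (j - 1)) (x : ℝ) {n : ℤ} (hn : n ≠ 0) :
    aeval x (wronskian (g n) (g (n + 1))) ≠ 0 := by
  set w := fun m => aeval x (wronskian (g m) (g (m + 1)))
  have hmono : Monotone w := monotone_aeval_wronskian hgrec x
  have hw0 : w 0 = 0 := by simp [w, hg0, hg1, wronskian_self_eq_zero]
  have hstep : ∀ m, w (m + 1) = w m + aeval x (g (m + 1)) ^ 2 := fun m => by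
    simp only [w]
    rw [wronskian_succ_of_rec hgrec, map_add, map_pow]
  rcases hn.lt_or_gt with hn | hn
  · have h := hstep (-1)
    rw [neg_add_cancel, hw0, hg0, map_one] at h
    have : w n ≤ w (-1) := hmono (by omega)
    exact (by linarith : w n < 0).ne
  · have h := hstep 0
    rw [zero_add, hw0, hg1, map_one] at h
    have : w 1 ≤ w n := hmono (by omega)
    exact (by linarith : 0 < w n).ne'

theorem im_ne_zero_of_aeval_wronskian_eq_zero (hg0 : g 0 = 1) (hg1 : g 1 = 1)
    (hgrec : ∀ j, g (j + 1) = X * g j - g (j - 1)) {n : ℤ} (hn : n ≠ 0) {ω : ℂ}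
    (hω : aeval ω (wronskian (g n) (g (n + 1))) = 0) : ω.im ≠ 0 := by
  intro him
  have hre : ω = algebraMap ℝ ℂ ω.re := Complex.ext (by simp) (by simp [him])
  rw [hre, aeval_algebraMap_apply, map_eq_zero_iff _ (algebraMap ℝ ℂ).injective] at hω
  exact aeval_wronskian_ne_zero hg0 hg1 hgrec ω.re hn hω

theorem aeval_add_inv_mul_one_add (hg0 : g 0 = 1) (hg1 : g 1 = 1)
    (hgrec : ∀ j, g (j + 1) = X * g j - g (j - 1)) {ζ : ℂ} (hζ : ζ ≠ 0) (j : ℤ) :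
    aeval (ζ + ζ⁻¹) (g j) * (1 + ζ) = ζ ^ j + ζ ^ (1 - j) := by
  refine congrFun (eq_of_rec_of_eq_of_eq (u := fun j => aeval (ζ + ζ⁻¹) (g j) * (1 + ζ))
    (v := fun j => ζ ^ j + ζ ^ (1 - j)) (ζ + ζ⁻¹) (fun j => ?_) (fun j => ?_) ?_ ?_) j
  · simp only [hgrec, map_sub, map_mul, aeval_X]
    ring
  · simp only [zpow_add₀ hζ, zpow_sub₀ hζ, zpow_one]
    field_simp
    ring
  · simp [hg0]
  · simp [hg1, add_comm]

theorem aeval_add_inv_mul_one_add_mul_zpow (hg0 : g 0 = 1) (hg1 : g 1 = 1)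
    (hgrec : ∀ j, g (j + 1) = X * g j - g (j - 1)) {ζ : ℂ} (hζ : ζ ≠ 0) (n : ℤ) :
    aeval (ζ + ζ⁻¹) (g (n + 1)) * ((1 + ζ) * ζ ^ n) = (ζ ^ n) ^ 2 * ζ + 1 ∧
      aeval (ζ + ζ⁻¹) (g n) * ((1 + ζ) * ζ ^ n) = (ζ ^ n) ^ 2 + ζ := by
  constructor
  · rw [← mul_assoc, aeval_add_inv_mul_one_add hg0 hg1 hgrec hζ, zpow_add_one₀ hζ,
      show 1 - (n + 1) = -n by ring, zpow_neg]
    field_simp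
  · rw [← mul_assoc, aeval_add_inv_mul_one_add hg0 hg1 hgrec hζ, zpow_sub₀ hζ, zpow_one]
    field_simp

theorem aeval_ne_zero_of_aeval_wronskian_eq_zero (hg0 : g 0 = 1) (hg1 : g 1 = 1)
    (hgrec : ∀ j, g (j + 1) = X * g j - g (j - 1)) {n : ℤ} (hn : n ≠ 0) {ω : ℂ}
    (hω : aeval ω (wronskian (g n) (g (n + 1))) = 0) : aeval ω (g n) ≠ 0 := by
  intro hb
  have hE := congrArg (aeval ω) (X_sq_sub_four_mul_wronskian hg0 hg1 hgrec n)
  have hQ := congrArg (aeval ω) (sq_sub_mul_add_sq_of_rec X hgrec n)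
  simp only [map_mul, map_sub, map_add, map_pow, map_ofNat, map_intCast, aeval_X, hω, hb,
    hg0, hg1, map_one] at hE hQ
  have h2 : ((2 * n - 1 : ℤ) : ℂ) * (ω - 2) = 0 := by push_cast; linear_combination -hQ - hE
  have hn' : ((2 * n - 1 : ℤ) : ℂ) ≠ 0 := Int.cast_ne_zero.2 (by omega)
  have hω2 : ω = 2 := sub_eq_zero.1 ((mul_eq_zero.1 h2).resolve_left hn')
  exact im_ne_zero_of_aeval_wronskian_eq_zero hg0 hg1 hgrec hn hω (by simp [hω2])

theorem pos_mul_norm_sub_norm_of_aeval_wronskian_eq_zero (hg0 : g 0 = 1) (hg1 : g 1 = 1)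
    (hgrec : ∀ j, g (j + 1) = X * g j - g (j - 1)) {n : ℤ} (hn : n ≠ 0) {ω : ℂ}
    (hω : aeval ω (wronskian (g n) (g (n + 1))) = 0) :
    0 < n * (‖aeval ω (g (n + 1))‖ - ‖aeval ω (g n)‖) := by
  have him := im_ne_zero_of_aeval_wronskian_eq_zero hg0 hg1 hgrec hn hω
  obtain ⟨ζ, hζ, rfl⟩ := exists_ne_zero_add_inv_eq ω
  rw [Complex.im_add_inv] at him
  have hnorm : ‖ζ‖ ≠ 1 := fun h => by
    simp [← Complex.sq_norm, h] at him
  have hsq : ζ ^ 2 ≠ 1 := fun h => hnorm <|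
    (pow_eq_one_iff_of_nonneg (norm_nonneg ζ) two_ne_zero).1 (by rw [← norm_pow, h, norm_one])
  set a := aeval (ζ + ζ⁻¹) (g (n + 1))
  set b := aeval (ζ + ζ⁻¹) (g n)
  set t := ζ ^ n
  have ht : t ≠ 0 := zpow_ne_zero n hζ
  obtain ⟨hA, hB⟩ := aeval_add_inv_mul_one_add_mul_zpow hg0 hg1 hgrec hζ n
  have hE : a ^ 2 - b ^ 2 + ((2 * n : ℝ) : ℂ) * (ζ + ζ⁻¹ - 2) = 0 := by
    have h := congrArg (aeval (ζ + ζ⁻¹)) (X_sq_sub_four_mul_wronskian hg0 hg1 hgrec n)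
    simp only [map_mul, map_sub, map_add, map_pow, map_ofNat, map_intCast, aeval_X, hω] at h
    push_cast
    linear_combination -h
  have hC := sq_sub_inv_sq_eq_of_sq_sub_sq_eq hζ ht hsq hA hB hE
  have hpos : 0 < (2 * n : ℝ) * ((‖t ^ 2‖ ^ 2 - 1) * (‖ζ‖ ^ 2 - 1)) := by
    have h := Real.zpow_sub_one_mul_sub_one_pos (norm_pos_iff.2 hζ) hnorm hn
    calc (0 : ℝ) < 2 * (n * ((‖ζ‖ ^ n - 1) * (‖ζ‖ - 1))) *
          ((‖ζ‖ ^ n + 1) * ((‖ζ‖ ^ n) ^ 2 + 1) * (‖ζ‖ + 1)) := by positivity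
      _ = _ := by rw [norm_pow, norm_zpow]; ring
  have key := Complex.pos_mul_sq_norm_mul_add_one_sub_sq_norm_add hC hpos
  rw [← hA, ← hB] at key
  simp only [norm_mul, mul_pow] at key
  refine pos_of_mul_pos_left (b := 2 * (‖a‖ + ‖b‖) * (‖1 + ζ‖ * ‖t‖) ^ 2) ?_
    (by positivity)
  linear_combination key

end

/-- for `n ≠ 0` and `ω ∈ ℂ` a root of `G n`, one has `g n (ω) ≠ 0`,
and with `h = g (n+1) (ω) / g n (ω)`: `|h| > 1` if `n > 0` and `|h| < 1` if `n < 0`. -/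
theorem stmt16 (f : ℤ → Polynomial ℤ)
    (hf0 : f 0 = 0) (hf1 : f 1 = 1)
    (hrec : ∀ j : ℤ, f (j + 1) = X * f j - f (j - 1))
    (g : ℤ → Polynomial ℤ) (hg : ∀ j : ℤ, g j = f j - f (j - 1))
    (G : ℤ → Polynomial ℤ)
    (hG : ∀ m : ℤ, G m = derivative (g (m + 1)) * g m - g (m + 1) * derivative (g m))
    (n : ℤ) (hn : n ≠ 0) (ω : ℂ) (hω : (Polynomial.aeval ω) (G n) = 0) :
    (Polynomial.aeval ω) (g n) ≠ 0 ∧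
    (0 < n → 1 < ‖(Polynomial.aeval ω) (g (n + 1)) / (Polynomial.aeval ω) (g n)‖) ∧
    (n < 0 → ‖(Polynomial.aeval ω) (g (n + 1)) / (Polynomial.aeval ω) (g n)‖ < 1) := by
  have hg0 : g 0 = 1 := by
    have h := hrec 0
    rw [zero_add, hf0, hf1, mul_zero, zero_sub] at h
    rw [hg, hf0, zero_sub, ← h]
  have hg1 : g 1 = 1 := by rw [hg, sub_self, hf0, hf1, sub_zero]
  have hgrec := rec_of_eq_sub_pred X hrec hg
  have hW : G n = wronskian (g n) (g (n + 1)) := by rw [hG, wronskian]; ring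
  rw [hW] at hω
  have hb := aeval_ne_zero_of_aeval_wronskian_eq_zero hg0 hg1 hgrec hn hω
  have hpos := pos_mul_norm_sub_norm_of_aeval_wronskian_eq_zero hg0 hg1 hgrec hn hω
  refine ⟨hb, fun hn => ?_, fun hn => ?_⟩
  · rw [norm_div, one_lt_div (norm_pos_iff.2 hb)]
    exact lt_of_sub_pos (pos_of_mul_pos_right hpos (by exact_mod_cast hn.le))
  · rw [norm_div, div_lt_one (norm_pos_iff.2 hb)]
    exact sub_neg.1 (neg_of_mul_pos_right hpos (by exact_mod_cast hn.le))
end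

section
/- Let n be an integer, p a prime dividing 2n, K a number field containing a root ω of G_n, and v a valuation on K extending the p-adic valuation with v(p) = 1. Then v(g_n(ω)) = 0. -/
/-!
Writing `Wₙ` for the Wronskian of `gₙ` and `gₙ₊₁` (so that `Gₙ = Wₙ`), the recurrence gives
`gₙ₊₁² - gₙ² = (X² - 4) Wₙ + 2n (2 - X)`. For `n ≠ 0` the polynomial `(X² - 4) Wₙ` is monic up to
sign, so the root `ω` of `Wₙ` is integral over `ℤ` and `v` is nonnegative on `ℤ[ω]`.
If `v (gₙ(ω)) > 0`, the identity and `v (2n) ≥ v p > 0` force `v (gₙ₊₁(ω)) > 0`. Since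
`ω gⱼ = gⱼ₊₁ + gⱼ₋₁` can be run in both directions, positivity of two consecutive values then
spreads to `g₀(ω) = g₁(ω) = 1`, a contradiction.
-/

open Polynomial

theorem AddValuation.nonneg_of_isIntegral {K Γ₀ : Type*} [Field K]
    [LinearOrderedAddCommGroupWithTop Γ₀] (v : AddValuation K Γ₀) {x : K} (hx : IsIntegral ℤ x) :
    0 ≤ v x :=
  OrderDual.toDual_le_toDual.mp <| Multiplicative.ofAdd_le.mp <|
    (Valuation.integer.integers v.toValuation).isIntegral_iff_v_le_one.mp hx.tower_top

section Valuation

variable {R Γ₀ : Type*} [CommRing R] [LinearOrderedAddCommMonoidWithTop Γ₀] (v : AddValuation R Γ₀)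

theorem AddValuation.pos_of_sq_eq_sq_add {a b c : R} (hb : 0 < v b) (hc : 0 < v c)
    (h : a ^ 2 = b ^ 2 + c) : 0 < v a := by
  have hb2 : 0 < v (b ^ 2) := by
    rw [pow_two, v.map_mul]
    exact hb.trans_le (le_add_of_nonneg_left hb.le)
  have ha2 : 0 < v (a ^ 2) := h ▸ (lt_min hb2 hc).trans_le (v.map_add _ _)
  by_contra! ha
  rw [pow_two, v.map_mul] at ha2
  exact (add_nonpos ha ha).not_gt ha2

theorem AddValuation.pos_and_pos_iff_of_recurrence {x : R} (hx : 0 ≤ v x) {a : ℤ → R}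
    (ha : ∀ j, a (j + 1) = x * a j - a (j - 1)) (j : ℤ) :
    (0 < v (a j) ∧ 0 < v (a (j + 1))) ↔ (0 < v (a 0) ∧ 0 < v (a 1)) := by
  have hcomb {b c : R} (hb : 0 < v b) (hc : 0 < v c) : 0 < v (x * b - c) := by
    refine (lt_min ?_ hc).trans_le (v.map_sub _ _)
    rw [v.map_mul]
    exact hb.trans_le (le_add_of_nonneg_left hx)
  have hper : Function.Periodic (fun j => 0 < v (a j) ∧ 0 < v (a (j + 1))) 1 := by
    intro j
    have hup : a (j + 1 + 1) = x * a (j + 1) - a j := by rw [ha, add_sub_cancel_right]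
    have hdown : a j = x * a (j + 1) - a (j + 1 + 1) := by rw [hup]; ring
    refine propext ⟨fun h => ⟨?_, h.1⟩, fun h => ⟨h.2, ?_⟩⟩
    · rw [hdown]; exact hcomb h.1 h.2
    · rw [hup]; exact hcomb h.2 h.1
  simpa using hper.int_mul_eq j

end Valuation

section Chebyshev

variable {R : Type*} [CommRing R]

/-- `g (n + 1)` is the Chebyshev polynomial `Vₙ` of the third kind in the variable `X = 2x`. -/
structure IsChebyshevV (g : ℤ → R[X]) : Prop where
  zero : g 0 = 1
  one : g 1 = 1
  succ : ∀ j, g (j + 1) = X * g j - g (j - 1)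

theorem isChebyshevV_sub {f : ℤ → R[X]} (hf0 : f 0 = 0) (hf1 : f 1 = 1)
    (hrec : ∀ j, f (j + 1) = X * f j - f (j - 1)) : IsChebyshevV fun j => f j - f (j - 1) where
  zero := by
    have := hrec 0
    norm_num [hf0, hf1] at this
    simp [hf0, ← this]
  one := by simp [hf0, hf1]
  succ j := by
    have h := hrec (j - 1)
    rw [sub_add_cancel] at h
    rw [add_sub_cancel_right, hrec, h]
    ring

namespace IsChebyshevV

variable {g : ℤ → R[X]}

theorem succ_succ (hg : IsChebyshevV g) (j : ℤ) : g (j + 1 + 1) = X * g (j + 1) - g j := by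
  rw [hg.succ, add_sub_cancel_right]

theorem two (hg : IsChebyshevV g) : g 2 = X - 1 := by
  simpa [hg.zero, hg.one, one_add_one_eq_two] using hg.succ_succ 0

theorem unique (hg : IsChebyshevV g) {g' : ℤ → R[X]} (hg' : IsChebyshevV g') :
    g = g' := by
  have hper : Function.Periodic (fun j => g j = g' j ∧ g (j + 1) = g' (j + 1)) 1 := by
    intro j
    refine propext ⟨fun h => ⟨?_, h.1⟩, fun h => ⟨h.2, ?_⟩⟩
    · linear_combination hg.succ_succ j - hg'.succ_succ j - h.2 + X * h.1
    · rw [hg.succ_succ, hg'.succ_succ, h.1, h.2]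
  funext j
  have := hper.int_mul_eq j
  simp only [mul_one, zero_add, hg.zero, hg'.zero, hg.one, hg'.one, and_self, eq_iff_iff,
    iff_true] at this
  exact this.1

theorem neg (hg : IsChebyshevV g) (j : ℤ) : g (-j) = g (j + 1) := by
  have hsymm : IsChebyshevV fun j => g (1 - j) :=
    { zero := by simpa using hg.one
      one := by simpa using hg.zero
      succ := fun j => by
        have := hg.succ_succ (-j)
        ring_nf at this ⊢
        linear_combination this }
  simpa using congrFun (hsymm.unique hg) (j + 1)

theorem casoratian (hg : IsChebyshevV g) (j : ℤ) :
    g (j + 1) ^ 2 + g j ^ 2 - X * g (j + 1) * g j = 2 - X := by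
  have hper : Function.Periodic (fun j => g (j + 1) ^ 2 + g j ^ 2 - X * g (j + 1) * g j) 1 := by
    intro j
    dsimp only
    rw [hg.succ_succ]
    ring
  simpa [hg.zero, hg.one, one_add_one_eq_two] using hper.int_mul_eq j

theorem wronskian_succ (hg : IsChebyshevV g) (j : ℤ) :
    wronskian (g (j + 1)) (g (j + 1 + 1)) = wronskian (g j) (g (j + 1)) + g (j + 1) ^ 2 := by
  simp only [wronskian, hg.succ_succ, derivative_sub, derivative_mul, derivative_X]
  ring

theorem sq_sub_sq (hg : IsChebyshevV g) (j : ℤ) :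
    g (j + 1) ^ 2 - g j ^ 2 =
      (X ^ 2 - 4) * wronskian (g j) (g (j + 1)) + 2 * (j : R[X]) * (2 - X) := by
  have hper : Function.Periodic (fun j : ℤ => g (j + 1) ^ 2 - g j ^ 2 -
      (X ^ 2 - 4) * wronskian (g j) (g (j + 1)) - 2 * (j : R[X]) * (2 - X)) 1 := by
    intro j
    dsimp only
    rw [hg.wronskian_succ, hg.succ_succ]
    push_cast
    linear_combination (2 : R[X]) * hg.casoratian j
  have := hper.int_mul_eq j
  simp only [mul_one, zero_add, hg.zero, hg.one, wronskian_self_eq_zero, Int.cast_zero] at this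
  linear_combination this

theorem wronskian_neg (hg : IsChebyshevV g) (j : ℤ) :
    wronskian (g (-j)) (g (-j + 1)) = -wronskian (g j) (g (j + 1)) := by
  rw [hg.neg, show -j + 1 = -(j - 1) by ring, hg.neg, sub_add_cancel, wronskian_neg_eq]

theorem monic_natDegree [Nontrivial R] (hg : IsChebyshevV g) (k : ℕ) :
    (g (k + 1)).Monic ∧ (g (k + 1)).natDegree = k := by
  induction k using Nat.twoStepInduction with
  | zero => simp [hg.one]
  | one =>
    rw [Nat.cast_one, one_add_one_eq_two, hg.two, ← C_1]
    exact ⟨monic_X_sub_C 1, natDegree_X_sub_C 1⟩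
  | more k ih₁ ih₂ =>
    have hrec : g ((k + 2 : ℕ) + 1) = X * g ((k + 1 : ℕ) + 1) - g (k + 1) := by
      rw [show ((k + 2 : ℕ) : ℤ) + 1 = (k + 1 : ℕ) + 1 + 1 by push_cast; ring, hg.succ_succ,
        Nat.cast_succ]
    have hX : (X * g ((k + 1 : ℕ) + 1)).natDegree = k + 2 := by
      rw [natDegree_X_mul ih₂.1.ne_zero, ih₂.2]
    rw [hrec]
    refine ⟨(monic_X.mul ih₂.1).sub_of_left (degree_lt_degree ?_), ?_⟩
    · rw [hX, ih₁.2]; omega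
    · rw [natDegree_sub_eq_left_of_natDegree_lt (by rw [hX, ih₁.2]; omega), hX]

theorem monic_X_sq_sub_four_mul_wronskian [Nontrivial R] (hg : IsChebyshevV g) {m : ℕ}
    (hm : m ≠ 0) : ((X ^ 2 - 4) * wronskian (g m) (g (m + 1))).Monic := by
  obtain ⟨k, rfl⟩ := Nat.exists_eq_succ_of_ne_zero hm
  have hlead := hg.monic_natDegree (k + 1)
  have hprev := hg.monic_natDegree k
  push_cast at hlead hprev ⊢
  rw [← sub_eq_iff_eq_add.mpr (hg.sq_sub_sq _), sub_sub]
  refine (hlead.1.pow 2).sub_of_left (degree_lt_degree ?_)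
  rw [hlead.1.natDegree_pow, hlead.2]
  refine (natDegree_add_le _ _).trans_lt (max_lt ?_ ?_)
  · exact natDegree_pow_le.trans_lt (by rw [hprev.2]; omega)
  · exact lt_of_le_of_lt (show _ ≤ 1 by compute_degree) (by omega)

theorem isIntegral_of_aeval_wronskian_eq_zero [Nontrivial R] {A : Type*} [CommRing A] [Algebra R A]
    (hg : IsChebyshevV g) {n : ℤ} (hn : n ≠ 0) {x : A}
    (hx : aeval x (wronskian (g n) (g (n + 1))) = 0) : IsIntegral R x := by
  obtain ⟨m, hm, hxm⟩ : ∃ m : ℕ, m ≠ 0 ∧ aeval x (wronskian (g m) (g (m + 1))) = 0 := by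
    obtain ⟨m, rfl | rfl⟩ := Int.eq_nat_or_neg n
    · exact ⟨m, by omega, hx⟩
    · rw [hg.wronskian_neg, map_neg, neg_eq_zero] at hx
      exact ⟨m, by omega, hx⟩
  exact ⟨_, hg.monic_X_sq_sub_four_mul_wronskian hm, by rw [← aeval_def, map_mul, hxm, mul_zero]⟩

theorem aeval_sq_of_aeval_wronskian_eq_zero {A : Type*} [CommRing A] [Algebra R A]
    (hg : IsChebyshevV g) {n : ℤ} {x : A} (hx : aeval x (wronskian (g n) (g (n + 1))) = 0) :
    aeval x (g (n + 1)) ^ 2 = aeval x (g n) ^ 2 + 2 * n * (2 - x) := by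
  have := congrArg (aeval x) (hg.sq_sub_sq n)
  simp only [map_sub, map_add, map_mul, map_pow, hx, mul_zero, zero_add, aeval_X,
    map_intCast, map_ofNat] at this
  linear_combination this

end IsChebyshevV
end Chebyshev

theorem stmt17_general (f : ℤ → Polynomial ℤ)
    (hf0 : f 0 = 0) (hf1 : f 1 = 1)
    (hrec : ∀ j : ℤ, f (j + 1) = X * f j - f (j - 1))
    (g : ℤ → Polynomial ℤ) (hg : ∀ j : ℤ, g j = f j - f (j - 1))
    (G : ℤ → Polynomial ℤ)
    (hG : ∀ m : ℤ, G m = derivative (g (m + 1)) * g m - g (m + 1) * derivative (g m))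
    (n : ℤ) (p : ℕ) (hdvd : (p : ℤ) ∣ 2 * n)
    (K : Type*) [Field K]
    (ω : K) (hω : (Polynomial.aeval ω) (G n) = 0)
    (v : AddValuation K (WithTop ℚ)) (hv : v (p : K) = 1) :
    v ((Polynomial.aeval ω) (g n)) = 0 := by
  have hV : IsChebyshevV g := (funext hg : g = _) ▸ isChebyshevV_sub hf0 hf1 hrec
  rw [show G n = wronskian (g n) (g (n + 1)) by rw [hG, wronskian]; ring] at hω
  rcases eq_or_ne n 0 with rfl | hn
  · simp [hV.zero]
  have hω_int : IsIntegral ℤ ω := hV.isIntegral_of_aeval_wronskian_eq_zero hn hω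
  have haeval_nonneg (Q : ℤ[X]) : 0 ≤ v (aeval ω Q) :=
    v.nonneg_of_isIntegral <| .of_mem_of_fg _ hω_int.fg_adjoin_singleton _ <|
      aeval_mem_adjoin_singleton _ _
  have h2n : 0 < v (2 * n : K) := by
    obtain ⟨m, hm⟩ := hdvd
    rw [show (2 * n : K) = p * m by exact_mod_cast congrArg (Int.cast : ℤ → K) hm, v.map_mul, hv]
    exact zero_lt_one.trans_le (le_add_of_nonneg_right (by simpa using haeval_nonneg m))
  have h2ω : 0 ≤ v (2 - ω) := by
    have h := haeval_nonneg (2 - X)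
    rwa [map_sub, map_ofNat, aeval_X] at h
  refine le_antisymm (not_lt.mp fun hpos => ?_) (haeval_nonneg _)
  have hpos' : 0 < v (aeval ω (g (n + 1))) := by
    refine v.pos_of_sq_eq_sq_add hpos ?_ (hV.aeval_sq_of_aeval_wronskian_eq_zero hω)
    rw [v.map_mul]
    exact h2n.trans_le (le_add_of_nonneg_right h2ω)
  have h01 := (v.pos_and_pos_iff_of_recurrence (v.nonneg_of_isIntegral hω_int)
    (a := fun j => aeval ω (g j)) (fun j => by simpa using congrArg (aeval ω) (hV.succ j)) n).mp
    ⟨hpos, hpos'⟩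
  simp [hV.zero] at h01

/-- let `p` be a prime dividing `2n`, `K` a number field containing a
root `ω` of `G n`, and `v` an (additive, rational-valued) valuation on `K` extending
the `p`-adic valuation, normalized by `v p = 1`. Then `v (g n (ω)) = 0`. -/
theorem stmt17 (f : ℤ → Polynomial ℤ)
    (hf0 : f 0 = 0) (hf1 : f 1 = 1)
    (hrec : ∀ j : ℤ, f (j + 1) = X * f j - f (j - 1))
    (g : ℤ → Polynomial ℤ) (hg : ∀ j : ℤ, g j = f j - f (j - 1))
    (G : ℤ → Polynomial ℤ)
    (hG : ∀ m : ℤ, G m = derivative (g (m + 1)) * g m - g (m + 1) * derivative (g m))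
    (n : ℤ) (p : ℕ) (hp : p.Prime) (hdvd : (p : ℤ) ∣ 2 * n)
    (K : Type*) [Field K] [NumberField K]
    (ω : K) (hω : (Polynomial.aeval ω) (G n) = 0)
    (v : AddValuation K (WithTop ℚ)) (hv : v (p : K) = 1) :
    v ((Polynomial.aeval ω) (g n)) = 0 :=
  stmt17_general f hf0 hf1 hrec g hg G hG n p hdvd K ω hω v hv
end

section
/- Let n be a nonzero integer and ω a root of G_n in an algebraically closed field of characteristic 0. Then g_n(ω) ≠ 0 and (g_{n+1}(ω)/g_n(ω))² - 1 = 2n(2 - ω)/g_n(ω)². -/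
open Polynomial

/-!
The sequence `g` solves `g (j + 1) = u * g j - g (j - 1)` with `g 0 = g 1 = 1`. Hence the quadratic
form `g m ^ 2 + g (m + 1) ^ 2 - u * g m * g (m + 1)` is the constant `2 - u`, while the Wronskian
`G m = W(g m, g (m + 1))` grows by `g (m + 1) ^ 2` at each step; together these give
`(4 - u ^ 2) * G m = g m ^ 2 - g (m + 1) ^ 2 - 2 * m * (u - 2)`.
At a root `ω` of `G n` this reads `g (n + 1) (ω) ^ 2 - g n (ω) ^ 2 = 2 * n * (2 - ω)`. If `g n (ω)`
vanished, the invariant would also give `g (n + 1) (ω) ^ 2 = 2 - ω`, forcing `ω = 2`, excluded since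
`g m (2) = 1` for all `m`, or `2 * n = 1`, impossible in characteristic zero.
-/

theorem Int.apply_eq_apply_zero_of_add_one {α : Type*} {u : ℤ → α}
    (h : ∀ m, u (m + 1) = u m) (m : ℤ) : u m = u 0 := by
  simpa using Function.Periodic.int_mul_eq (c := (1 : ℤ)) h m

section

variable {R : Type*} [CommRing R]

def ThreeTermRec (x : R) (a : ℤ → R) : Prop :=
  ∀ j, a (j + 1) = x * a j - a (j - 1)

namespace ThreeTermRec

variable {x : R} {a : ℤ → R}

theorem succ_succ (h : ThreeTermRec x a) (m : ℤ) : a (m + 1 + 1) = x * a (m + 1) - a m := by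
  rw [h (m + 1), add_sub_cancel_right]

theorem sub_shift (h : ThreeTermRec x a) : ThreeTermRec x fun j => a j - a (j - 1) := by
  intro j
  have h' := h (j - 1)
  rw [sub_add_cancel] at h'
  simp only [add_sub_cancel_right]
  linear_combination h j - h'

theorem map {S F : Type*} [CommRing S] [FunLike F R S] [RingHomClass F R S]
    (h : ThreeTermRec x a) (φ : F) : ThreeTermRec (φ x) fun j => φ (a j) := by
  intro j
  simp only [h j, map_sub, map_mul]

theorem sq_add_sq_sub_mul_eq (h : ThreeTermRec x a) (m : ℤ) :
    a m ^ 2 + a (m + 1) ^ 2 - x * a m * a (m + 1) = a 0 ^ 2 + a 1 ^ 2 - x * a 0 * a 1 := by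
  refine Int.apply_eq_apply_zero_of_add_one
    (u := fun m => a m ^ 2 + a (m + 1) ^ 2 - x * a m * a (m + 1)) (fun m => ?_) m
  rw [h.succ_succ m]
  ring

theorem eq_add_mul_of_two (h : ThreeTermRec 2 a) (m : ℤ) :
    a m = a 0 + m * (a 1 - a 0) := by
  have step (m : ℤ) : a (m + 1) - a m = a 1 - a 0 := by
    refine (Int.apply_eq_apply_zero_of_add_one (u := fun m => a (m + 1) - a m)
      (fun m => ?_) m).trans (by simp only [zero_add])
    linear_combination h.succ_succ m
  have := Int.apply_eq_apply_zero_of_add_one (u := fun m => a m - m * (a 1 - a 0))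
    (fun m => by push_cast; linear_combination step m) m
  simp only [Int.cast_zero, zero_mul, sub_zero] at this
  linear_combination this

variable {a : ℤ → R[X]}

theorem wronskian_succ (h : ThreeTermRec X a) (m : ℤ) :
    wronskian (a (m + 1)) (a (m + 1 + 1)) = wronskian (a m) (a (m + 1)) + a (m + 1) ^ 2 := by
  rw [h.succ_succ m, wronskian, wronskian, derivative_sub, derivative_mul, derivative_X]
  ring

theorem sq_add_sq_sub_X_mul_eq (h : ThreeTermRec X a) (h0 : a 0 = 1) (h1 : a 1 = 1) (m : ℤ) :
    a m ^ 2 + a (m + 1) ^ 2 - X * a m * a (m + 1) = 2 - X := by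
  rw [h.sq_add_sq_sub_mul_eq m, h0, h1]
  ring

theorem four_sub_X_sq_mul_wronskian (h : ThreeTermRec X a) (h0 : a 0 = 1) (h1 : a 1 = 1)
    (m : ℤ) : (4 - X ^ 2) * wronskian (a m) (a (m + 1))
      = a m ^ 2 - a (m + 1) ^ 2 - 2 * (m : R[X]) * (X - 2) := by
  set D : ℤ → R[X] := fun m => (4 - X ^ 2) * wronskian (a m) (a (m + 1))
    - (a m ^ 2 - a (m + 1) ^ 2 - 2 * (m : R[X]) * (X - 2))
  have hD0 : D 0 = 0 := by simp [D, h0, h1, wronskian_self_eq_zero]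
  have hstep (m : ℤ) : D (m + 1) = D m := by
    simp only [D]
    rw [wronskian_succ h, h.succ_succ m]
    push_cast
    linear_combination 2 * h.sq_add_sq_sub_X_mul_eq h0 h1 m
  exact sub_eq_zero.mp ((Int.apply_eq_apply_zero_of_add_one hstep m).trans hD0)

variable {K : Type*} [CommRing K] [Algebra R K]

theorem aeval_succ_sq_sub_aeval_sq (h : ThreeTermRec X a) (h0 : a 0 = 1) (h1 : a 1 = 1)
    {n : ℤ} {ω : K} (hω : aeval ω (wronskian (a n) (a (n + 1))) = 0) :
    aeval ω (a (n + 1)) ^ 2 - aeval ω (a n) ^ 2 = 2 * n * (2 - ω) := by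
  have := congrArg (aeval ω) (h.four_sub_X_sq_mul_wronskian h0 h1 n)
  simp only [map_mul, map_sub, map_pow, map_ofNat, map_intCast, aeval_X, hω, mul_zero] at this
  linear_combination this

theorem aeval_two_eq_one (h : ThreeTermRec X a) (h0 : a 0 = 1) (h1 : a 1 = 1) (m : ℤ) :
    aeval (2 : K) (a m) = 1 := by
  have h2 : ThreeTermRec (2 : K) fun j => aeval (2 : K) (a j) := by
    simpa using h.map (aeval (2 : K))
  rw [h2.eq_add_mul_of_two m, h0, h1, map_one, sub_self, mul_zero, add_zero]

theorem aeval_ne_zero_of_aeval_wronskian_eq_zero [IsDomain K] [CharZero K] (h : ThreeTermRec X a)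
    (h0 : a 0 = 1) (h1 : a 1 = 1) {n : ℤ} {ω : K}
    (hω : aeval ω (wronskian (a n) (a (n + 1))) = 0) : aeval ω (a n) ≠ 0 := by
  intro hA
  have hdiff := h.aeval_succ_sq_sub_aeval_sq h0 h1 hω
  have hinv := congrArg (aeval ω) (h.sq_add_sq_sub_X_mul_eq h0 h1 n)
  simp only [map_add, map_sub, map_mul, map_pow, map_ofNat, aeval_X, hA] at hinv
  rw [hA] at hdiff
  have hprod : (2 - ω) * ((2 * n - 1 : ℤ) : K) = 0 := by
    push_cast
    linear_combination hinv - hdiff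
  rcases mul_eq_zero.mp hprod with hω2 | hn
  · rw [← sub_eq_zero.mp hω2, h.aeval_two_eq_one h0 h1] at hA
    exact one_ne_zero hA
  · have : (2 * n - 1 : ℤ) = 0 := by exact_mod_cast hn
    omega

end ThreeTermRec

end

theorem stmt18_general (f : ℤ → Polynomial ℤ)
    (hf0 : f 0 = 0) (hf1 : f 1 = 1)
    (hrec : ∀ j : ℤ, f (j + 1) = X * f j - f (j - 1))
    (g : ℤ → Polynomial ℤ) (hg : ∀ j : ℤ, g j = f j - f (j - 1))
    (G : ℤ → Polynomial ℤ)
    (hG : ∀ m : ℤ, G m = derivative (g (m + 1)) * g m - g (m + 1) * derivative (g m))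
    (n : ℤ)
    (K : Type*) [Field K] [CharZero K]
    (ω : K) (hω : (Polynomial.aeval ω) (G n) = 0) :
    (Polynomial.aeval ω) (g n) ≠ 0 ∧
    ((Polynomial.aeval ω) (g (n + 1)) / (Polynomial.aeval ω) (g n)) ^ 2 - 1
      = ((2 * n : ℤ) : K) * (2 - ω) / ((Polynomial.aeval ω) (g n)) ^ 2 := by
  have hgrec : ThreeTermRec X g := by
    rw [funext hg]
    exact ThreeTermRec.sub_shift hrec
  have hf_neg_one : f (-1) = -1 := by
    have := hrec 0
    rw [zero_add, zero_sub, hf0, hf1, mul_zero, zero_sub] at this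
    linear_combination this
  have hg0 : g 0 = 1 := by rw [hg, zero_sub, hf0, hf_neg_one]; ring
  have hg1 : g 1 = 1 := by rw [hg, sub_self, hf0, hf1, sub_zero]
  have hW : G n = wronskian (g n) (g (n + 1)) := by rw [hG, wronskian]; ring
  rw [hW] at hω
  have hA := hgrec.aeval_ne_zero_of_aeval_wronskian_eq_zero hg0 hg1 hω
  refine ⟨hA, ?_⟩
  rw [div_pow, div_sub_one (pow_ne_zero 2 hA), hgrec.aeval_succ_sq_sub_aeval_sq hg0 hg1 hω]
  push_cast
  ring

/-- for `n ≠ 0` and `ω` a root of `G n` in an algebraically closed field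
of characteristic 0, `g n (ω) ≠ 0` and
`(g (n+1) (ω) / g n (ω))² - 1 = 2n (2 - ω) / g n (ω)²`. -/
theorem stmt18 (f : ℤ → Polynomial ℤ)
    (hf0 : f 0 = 0) (hf1 : f 1 = 1)
    (hrec : ∀ j : ℤ, f (j + 1) = X * f j - f (j - 1))
    (g : ℤ → Polynomial ℤ) (hg : ∀ j : ℤ, g j = f j - f (j - 1))
    (G : ℤ → Polynomial ℤ)
    (hG : ∀ m : ℤ, G m = derivative (g (m + 1)) * g m - g (m + 1) * derivative (g m))
    (n : ℤ) (hn : n ≠ 0)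
    (K : Type*) [Field K] [IsAlgClosed K] [CharZero K]
    (ω : K) (hω : (Polynomial.aeval ω) (G n) = 0) :
    (Polynomial.aeval ω) (g n) ≠ 0 ∧
    ((Polynomial.aeval ω) (g (n + 1)) / (Polynomial.aeval ω) (g n)) ^ 2 - 1
      = ((2 * n : ℤ) : K) * (2 - ω) / ((Polynomial.aeval ω) (g n)) ^ 2 :=
  stmt18_general f hf0 hf1 hrec g hg G hG n K ω hω
end
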